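/- arXiv:math/0009078 — 7 statements merged into one kernel-verified Lean document; each statement's English description precedes it below -/
import Mathlib

section
/- For every natural number n ≥ 3 and every complete first-order theory T, if T has the property SOP_{n+1} then T has the property SOP_n. -/
/-!
From a `φ`-increasing sequence `(ā_k)` witnessing `SOP_{n+1}`, take the pairs `(ā_{2k}, ā_{2k+1})`
and the formula `ψ(x̄ x̄', ȳ ȳ') := φ(x̄, x̄') ∧ φ(x̄', ȳ) ∧ φ(x̄, ȳ)`; the pairs are `ψ`-increasing.
A `ψ`-cycle `(x̄_l, ȳ_l)_{l < n}` unfolds into the `φ`-cycle `x̄_0, ȳ_0, x̄_1, …, x̄_{n-1}` of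
length `n + 1`, which cannot exist, so `ψ` and the pairs witness `SOP_n`.
-/

open FirstOrder FirstOrder.Language

universe u v

/-- A first-order theory `T` has the `n`-strong order property `SOP_n` if there are a formula
`φ(x̄,ȳ)` (with `lg x̄ = lg ȳ = m`), a model `M` of `T` and tuples `ā_k` (`k < ω`) from `M` such
that `M ⊨ φ[ā_k, ā_l]` for all `k < l < ω`, while `M` satisfies the negation of
`∃ x̄_0 … x̄_{n-1} ⋀ {φ(x̄_l, x̄_k) : k = l + 1 mod n}`. -/
def SOP {L : FirstOrder.Language.{u, v}} (n : ℕ) (T : L.Theory) : Prop :=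
  ∃ (m : ℕ) (φ : L.Formula (Fin m ⊕ Fin m)) (M : Theory.ModelType.{u, v, max u v} T)
    (a : ℕ → Fin m → M),
    (∀ k l : ℕ, k < l → φ.Realize (Sum.elim (a k) (a l))) ∧
    ¬ ∃ b : ℕ → Fin m → M, ∀ l < n, φ.Realize (Sum.elim (b l) (b ((l + 1) % n)))

namespace Relation

variable {X Y : Type*}

def HasCycle (R : X → X → Prop) (n : ℕ) : Prop :=
  ∃ b : ℕ → X, ∀ l < n, R (b l) (b ((l + 1) % n))

def PairRel (R : X → X → Prop) (p q : X × X) : Prop :=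
  R p.1 p.2 ∧ R p.2 q.1 ∧ R p.1 q.1

theorem HasCycle.map {R : X → X → Prop} {S : Y → Y → Prop} {n : ℕ} (f : X → Y)
    (hf : ∀ x y, R x y → S (f x) (f y)) (h : HasCycle R n) : HasCycle S n := by
  obtain ⟨b, hb⟩ := h
  exact ⟨f ∘ b, fun l hl => hf _ _ (hb l hl)⟩

theorem pairRel_of_forall_lt {R : X → X → Prop} {a : ℕ → X}
    (ha : ∀ k l, k < l → R (a k) (a l)) {k l : ℕ} (hkl : k < l) :
    PairRel R (a (2 * k), a (2 * k + 1)) (a (2 * l), a (2 * l + 1)) :=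
  ⟨ha _ _ (by omega), ha _ _ (by omega), ha _ _ (by omega)⟩

theorem HasCycle.of_pairRel {R : X → X → Prop} {n : ℕ} (hn : 0 < n)
    (h : HasCycle (PairRel R) n) : HasCycle R (n + 1) := by
  obtain ⟨b, hb⟩ := h
  let d : ℕ → X
    | 0 => (b 0).1
    | 1 => (b 0).2
    | j + 1 => (b j).1
  -- For `l = n` this is the edge closing the cycle at `d 0 = (b 0).1`.
  have hd_succ : ∀ l, 1 ≤ l → l ≤ n → d ((l + 1) % (n + 1)) = (b (l % n)).1 := by
    intro l hl₁ hln
    rcases hln.lt_or_eq with hln | rfl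
    · obtain ⟨j, rfl⟩ : ∃ j, l = j + 1 := ⟨l - 1, by omega⟩
      rw [Nat.mod_eq_of_lt (by omega : j + 1 + 1 < n + 1), Nat.mod_eq_of_lt hln]
      rfl
    · rw [Nat.mod_self, Nat.mod_self]
  refine ⟨d, fun l hl => ?_⟩
  match l with
  | 0 =>
    rw [Nat.mod_eq_of_lt (by omega : 0 + 1 < n + 1)]
    exact (hb 0 hn).1
  | 1 =>
    rw [hd_succ 1 le_rfl hn]
    exact (hb 0 hn).2.1
  | j + 2 =>
    rw [hd_succ (j + 2) (by omega) (by omega)]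
    exact (hb (j + 1) (by omega)).2.2

end Relation

namespace FirstOrder.Language.Formula

open Relation

variable {L : Language.{u, v}} {α : Type*} {m : ℕ}

def RealizeRel (φ : L.Formula (α ⊕ α)) (M : Type*) [L.Structure M] (x y : α → M) : Prop :=
  φ.Realize (Sum.elim x y)

/-- `ψ(x̄ x̄', ȳ ȳ') := φ(x̄, x̄') ∧ φ(x̄', ȳ) ∧ φ(x̄, ȳ)`, a `2m`-tuple being the `Fin.append` of
its two halves. -/
def pairFormula (φ : L.Formula (Fin m ⊕ Fin m)) : L.Formula (Fin (m + m) ⊕ Fin (m + m)) :=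
  φ.relabel (Sum.inl ∘ Sum.elim (Fin.castAdd m) (Fin.natAdd m)) ⊓
    φ.relabel (Sum.elim (Sum.inl ∘ Fin.natAdd m) (Sum.inr ∘ Fin.castAdd m)) ⊓
    φ.relabel (Sum.elim (Sum.inl ∘ Fin.castAdd m) (Sum.inr ∘ Fin.castAdd m))

theorem realizeRel_pairFormula (φ : L.Formula (Fin m ⊕ Fin m)) (M : Type*) [L.Structure M]
    (u w : Fin (m + m) → M) :
    RealizeRel (pairFormula φ) M u w ↔ PairRel (RealizeRel φ M)
      (u ∘ Fin.castAdd m, u ∘ Fin.natAdd m) (w ∘ Fin.castAdd m, w ∘ Fin.natAdd m) := by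
  simp only [RealizeRel, pairFormula, PairRel, realize_inf, realize_relabel, and_assoc,
    ← Function.comp_assoc, Sum.comp_elim, Sum.elim_comp_inl, Sum.elim_comp_inr]

theorem realizeRel_pairFormula_append (φ : L.Formula (Fin m ⊕ Fin m)) (M : Type*)
    [L.Structure M] (x x' y y' : Fin m → M) :
    RealizeRel (pairFormula φ) M (Fin.append x x') (Fin.append y y') ↔
      PairRel (RealizeRel φ M) (x, x') (y, y') := by
  have hleft (z z' : Fin m → M) : Fin.append z z' ∘ Fin.castAdd m = z :=
    funext (Fin.append_left z z')
  have hright (z z' : Fin m → M) : Fin.append z z' ∘ Fin.natAdd m = z' :=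
    funext (Fin.append_right z z')
  rw [realizeRel_pairFormula, hleft, hright, hleft, hright]

end FirstOrder.Language.Formula

theorem sop_succ_implies_sop_general {L : FirstOrder.Language.{u, v}} (T : L.Theory)
    (n : ℕ) (hn : 3 ≤ n) (h : SOP (n + 1) T) : SOP n T := by
  obtain ⟨m, φ, M, a, ha, hcyc⟩ := h
  refine ⟨m + m, φ.pairFormula, M, fun k => Fin.append (a (2 * k)) (a (2 * k + 1)),
    fun k l hkl => ?_, fun hψ => hcyc ?_⟩
  · exact (Formula.realizeRel_pairFormula_append φ M _ _ _ _).2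
      (Relation.pairRel_of_forall_lt ha hkl)
  · have hψ' : Relation.HasCycle (φ.pairFormula.RealizeRel M) n := hψ
    exact (hψ'.map _ fun u w => (Formula.realizeRel_pairFormula φ M u w).1).of_pairRel
      (by omega)

/-- For every `n ≥ 3` and every complete first-order theory `T`,
if `T` has `SOP_{n+1}` then `T` has `SOP_n`. -/
theorem sop_succ_implies_sop {L : FirstOrder.Language.{u, v}} (T : L.Theory) (hT : T.IsComplete)
    (n : ℕ) (hn : 3 ≤ n) (h : SOP (n + 1) T) : SOP n T :=
  sop_succ_implies_sop_general T n hn h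
end

section
/- Every model M of T0 in which Q0^M and Q2^M are nonempty and in which the partial functions given by R0 and R3 are onto Q0^M (for every x ∈ Q0^M there is y ∈ Q1^M with R0(y,x), and there is z ∈ Q2^M with R3(z,x)) can be extended to a model of T0+ with the same universe. -/
/-- A model of the theory `T0+`: the unary predicates `Q0`, `Q1`, `Q2` partition the universe,
`F0 : Q1 → Q0`, `F1 : Q2 × Q0 → Q1`, `F2 : Q0 → Q2`, `F3 : Q2 → Q0` are (total) functions,
`F0 (F1 z x) = x` whenever `Q2 z` and `Q0 x`, and `F3 (F2 x) = x` whenever `Q0 x`. -/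
structure T0PlusModel (M : Type*) where
  Q0 : M → Prop
  Q1 : M → Prop
  Q2 : M → Prop
  F0 : M → M
  F1 : M → M → M
  F2 : M → M
  F3 : M → M
  partition_total : ∀ x, Q0 x ∨ Q1 x ∨ Q2 x
  partition_01 : ∀ x, ¬(Q0 x ∧ Q1 x)
  partition_02 : ∀ x, ¬(Q0 x ∧ Q2 x)
  partition_12 : ∀ x, ¬(Q1 x ∧ Q2 x)
  ax_F0 : ∀ x, Q1 x → Q0 (F0 x)
  ax_F1 : ∀ z x, Q2 z → Q0 x → Q1 (F1 z x)
  ax_F2 : ∀ x, Q0 x → Q2 (F2 x)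
  ax_F3 : ∀ z, Q2 z → Q0 (F3 z)
  ax_F0F1 : ∀ z x, Q2 z → Q0 x → F0 (F1 z x) = x
  ax_F3F2 : ∀ x, Q0 x → F3 (F2 x) = x

/-- A model of the relational theory `T0`: `Q0`, `Q1`, `Q2` partition the universe, `R0` is the
graph of a partial function from `Q1` to `Q0`, `R1` is the graph of a partial function from
`Q2 × Q0` to `Q1`, `R2` is the graph of a partial function from `Q0` to `Q2`, `R3` is the graph
of a partial function from `Q2` to `Q0`, `R1 z x y` implies `R0 y x`, and `R2 x z` implies
`R3 z x`. -/
structure T0Model (M : Type*) where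
  Q0 : M → Prop
  Q1 : M → Prop
  Q2 : M → Prop
  R0 : M → M → Prop
  R1 : M → M → M → Prop
  R2 : M → M → Prop
  R3 : M → M → Prop
  partition_total : ∀ x, Q0 x ∨ Q1 x ∨ Q2 x
  partition_01 : ∀ x, ¬(Q0 x ∧ Q1 x)
  partition_02 : ∀ x, ¬(Q0 x ∧ Q2 x)
  partition_12 : ∀ x, ¬(Q1 x ∧ Q2 x)
  R0_dom : ∀ y x, R0 y x → Q1 y ∧ Q0 x
  R0_fun : ∀ y x x', R0 y x → R0 y x' → x = x'
  R1_dom : ∀ z x y, R1 z x y → Q2 z ∧ Q0 x ∧ Q1 y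
  R1_fun : ∀ z x y y', R1 z x y → R1 z x y' → y = y'
  R2_dom : ∀ x z, R2 x z → Q0 x ∧ Q2 z
  R2_fun : ∀ x z z', R2 x z → R2 x z' → z = z'
  R3_dom : ∀ z x, R3 z x → Q2 z ∧ Q0 x
  R3_fun : ∀ z x x', R3 z x → R3 z x' → x = x'
  ax_R1R0 : ∀ z x y, R1 z x y → R0 y x
  ax_R2R3 : ∀ x z, R2 x z → R3 z x

/-- A model `S` of `T0` can be extended to a model of `T0+` with the same universe: there are
total functions `F0`, `F1`, `F2`, `F3` on `M` extending the partial functions given by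
`R0`, `R1`, `R2`, `R3` which, together with `Q0`, `Q1`, `Q2`, make `M` a model of `T0+`. -/
def T0Model.ExtendsToT0Plus {M : Type*} (S : T0Model M) : Prop :=
  ∃ P : T0PlusModel M,
    P.Q0 = S.Q0 ∧ P.Q1 = S.Q1 ∧ P.Q2 = S.Q2 ∧
    (∀ y x, S.R0 y x → P.F0 y = x) ∧
    (∀ z x y, S.R1 z x y → P.F1 z x = y) ∧
    (∀ x z, S.R2 x z → P.F2 x = z) ∧
    (∀ z x, S.R3 z x → P.F3 z = x)

/-- Every model `M` of `T0` in which `Q0^M` and `Q2^M` are nonempty and in which the partial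
functions given by `R0` and `R3` are onto `Q0^M` can be extended to a model of `T0+`
with the same universe. -/
theorem T0Model.extendsToT0Plus_of_onto {M : Type*} (S : T0Model M)
    (hQ0 : ∃ x, S.Q0 x) (hQ2 : ∃ z, S.Q2 z)
    (hR0onto : ∀ x, S.Q0 x → ∃ y, S.Q1 y ∧ S.R0 y x)
    (hR3onto : ∀ x, S.Q0 x → ∃ z, S.Q2 z ∧ S.R3 z x) :
    S.ExtendsToT0Plus := by
  classical
  set x0 := hQ0.choose with hx0
  have hx0Q : S.Q0 x0 := hQ0.choose_spec
  set F0 : M → M := fun y => if h : ∃ x, S.R0 y x then h.choose else x0 with hF0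
  set F3 : M → M := fun z => if h : ∃ x, S.R3 z x then h.choose else x0 with hF3
  set F1 : M → M → M := fun z x =>
    if h : ∃ y, S.R1 z x y then h.choose
    else if h2 : S.Q0 x then (hR0onto x h2).choose else x0 with hF1
  set F2 : M → M := fun x =>
    if h : ∃ z, S.R2 x z then h.choose
    else if h2 : S.Q0 x then (hR3onto x h2).choose else hQ2.choose with hF2
  have F0ext : ∀ y x, S.R0 y x → F0 y = x := by
    intro y x hr
    have h : ∃ x, S.R0 y x := ⟨x, hr⟩
    simp only [hF0, dif_pos h]
    exact S.R0_fun y _ x h.choose_spec hr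
  have F3ext : ∀ z x, S.R3 z x → F3 z = x := by
    intro z x hr
    have h : ∃ x, S.R3 z x := ⟨x, hr⟩
    simp only [hF3, dif_pos h]
    exact S.R3_fun z _ x h.choose_spec hr
  have F1ext : ∀ z x y, S.R1 z x y → F1 z x = y := by
    intro z x y hr
    have h : ∃ y, S.R1 z x y := ⟨y, hr⟩
    simp only [hF1, dif_pos h]
    exact S.R1_fun z x _ y h.choose_spec hr
  have F2ext : ∀ x z, S.R2 x z → F2 x = z := by
    intro x z hr
    have h : ∃ z, S.R2 x z := ⟨z, hr⟩
    simp only [hF2, dif_pos h]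
    exact S.R2_fun x _ z h.choose_spec hr
  have hF1R0 : ∀ z x, S.Q2 z → S.Q0 x → S.R0 (F1 z x) x := by
    intro z x hz hx
    by_cases h : ∃ y, S.R1 z x y
    · simp only [hF1, dif_pos h]; exact S.ax_R1R0 z x _ h.choose_spec
    · simp only [hF1, dif_neg h, dif_pos hx]; exact (hR0onto x hx).choose_spec.2
  have hF2R3 : ∀ x, S.Q0 x → S.R3 (F2 x) x := by
    intro x hx
    by_cases h : ∃ z, S.R2 x z
    · simp only [hF2, dif_pos h]; exact S.ax_R2R3 x _ h.choose_spec
    · simp only [hF2, dif_neg h, dif_pos hx]; exact (hR3onto x hx).choose_spec.2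
  refine ⟨⟨S.Q0, S.Q1, S.Q2, F0, F1, F2, F3, S.partition_total, S.partition_01,
    S.partition_02, S.partition_12, ?_, ?_, ?_, ?_, ?_, ?_⟩,
    rfl, rfl, rfl, F0ext, F1ext, F2ext, F3ext⟩
  · intro y _
    simp only [hF0]
    split
    · next h => exact (S.R0_dom y _ h.choose_spec).2
    · exact hx0Q
  · intro z x hz hx
    by_cases h : ∃ y, S.R1 z x y
    · simp only [hF1, dif_pos h]; exact (S.R1_dom z x _ h.choose_spec).2.2
    · simp only [hF1, dif_neg h, dif_pos hx]; exact (hR0onto x hx).choose_spec.1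
  · intro x hx
    by_cases h : ∃ z, S.R2 x z
    · simp only [hF2, dif_pos h]; exact (S.R2_dom x _ h.choose_spec).2
    · simp only [hF2, dif_neg h, dif_pos hx]; exact (hR3onto x hx).choose_spec.1
  · intro z hz
    simp only [hF3]
    split
    · next h => exact (S.R3_dom z _ h.choose_spec).2
    · exact hx0Q
  · intro z x hz hx
    exact F0ext _ _ (hF1R0 z x hz hx)
  · intro x hx
    exact F3ext _ _ (hF2R3 x hx)
end

section
/- There exists a model M of T0 such that Q0^M and Q2^M are nonempty, the partial function given by R3 is onto Q0^M (for every x ∈ Q0^M there is z ∈ Q2^M with R3(z,x)), and M cannot be extended to a model of T0+ with the same universe. -/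
/-- There exists a model `M` of `T0` such that `Q0^M` and `Q2^M` are nonempty, the partial
function given by `R3` is onto `Q0^M`, and `M` cannot be extended to a model of `T0+`
with the same universe. -/
theorem exists_t0Model_not_extendsToT0Plus :
    ∃ (M : Type) (S : T0Model M),
      (∃ x, S.Q0 x) ∧ (∃ z, S.Q2 z) ∧
      (∀ x, S.Q0 x → ∃ z, S.Q2 z ∧ S.R3 z x) ∧
      ¬ S.ExtendsToT0Plus := by
  refine ⟨Bool,
    { Q0 := fun x => x = true
      Q1 := fun _ => False
      Q2 := fun x => x = false
      R0 := fun _ _ => False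
      R1 := fun _ _ _ => False
      R2 := fun _ _ => False
      R3 := fun z x => z = false ∧ x = true
      partition_total := by decide
      partition_01 := by simp
      partition_02 := by simp
      partition_12 := by simp
      R0_dom := by simp
      R0_fun := by simp
      R1_dom := by simp
      R1_fun := by simp
      R2_dom := by simp
      R2_fun := by simp
      R3_dom := fun z x h => ⟨h.1, h.2⟩
      R3_fun := fun z x x' h h' => h.2.trans h'.2.symm
      ax_R1R0 := by simp
      ax_R2R3 := by simp }, ⟨true, rfl⟩, ⟨false, rfl⟩,
    fun x hx => ⟨false, rfl, rfl, hx⟩, ?_⟩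
  rintro ⟨P, h0, h1, h2, -⟩
  have := P.ax_F1 false true (by rw [h2]) (by rw [h0])
  rw [h1] at this
  exact this
end

section
/- Every model M of T0 embeds into a model of T0+: there exist a model N of T0+ and an injection g from the universe of M into the universe of N such that g preserves Q0, Q1 and Q2, and whenever R0(y,x) holds in M then F0(g(y)) = g(x) holds in N, whenever R1(z,x,y) holds in M then F1(g(z),g(x)) = g(y) holds in N, whenever R2(x,z) holds in M then F2(g(x)) = g(z) holds in N, and whenever R3(z,x) holds in M then F3(g(z)) = g(x) holds in N. -/
namespace T0Aux

variable {M : Type} (S : T0Model M)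

abbrev A := {x : M // S.Q0 x}
abbrev B := {x : M // S.Q1 x}
abbrev C := {x : M // S.Q2 x}
abbrev A' := A S ⊕ Unit
abbrev C' := C S ⊕ A' S
abbrev B' := B S ⊕ (C' S × A' S)
abbrev N := A' S ⊕ (B' S ⊕ C' S)

open Classical in
noncomputable def f0 : B' S → A' S
  | Sum.inl y =>
      if h : ∃ x, S.R0 y.1 x then Sum.inl ⟨h.choose, (S.R0_dom _ _ h.choose_spec).2⟩
      else Sum.inr ()
  | Sum.inr p => p.2

open Classical in
noncomputable def f1 (z : C' S) (x : A' S) : B' S :=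
  if h : ∃ w : C S × A S × M, (Sum.inl w.1 : C' S) = z ∧ (Sum.inl w.2.1 : A' S) = x ∧
      S.R1 w.1.1 w.2.1.1 w.2.2 then
    Sum.inl ⟨h.choose.2.2, (S.R1_dom _ _ _ h.choose_spec.2.2).2.2⟩
  else Sum.inr (z, x)

open Classical in
noncomputable def f2 : A' S → C' S
  | Sum.inl x =>
      if h : ∃ z, S.R2 x.1 z then Sum.inl ⟨h.choose, (S.R2_dom _ _ h.choose_spec).2⟩
      else Sum.inr (Sum.inl x)
  | Sum.inr u => Sum.inr (Sum.inr u)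

open Classical in
noncomputable def f3 : C' S → A' S
  | Sum.inl z =>
      if h : ∃ x, S.R3 z.1 x then Sum.inl ⟨h.choose, (S.R3_dom _ _ h.choose_spec).2⟩
      else Sum.inr ()
  | Sum.inr a => a

theorem f0_graph {y x : M} (h : S.R0 y x) (hy : S.Q1 y) (hx : S.Q0 x) :
    f0 S (Sum.inl ⟨y, hy⟩) = Sum.inl ⟨x, hx⟩ := by
  classical
  simp only [f0]
  rw [dif_pos ⟨x, h⟩]
  exact congrArg Sum.inl (Subtype.ext
    (S.R0_fun _ _ _ (Exists.choose_spec (⟨x, h⟩ : ∃ x', S.R0 y x')) h))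

theorem f0_f1 (z : C' S) (x : A' S) : f0 S (f1 S z x) = x := by
  classical
  unfold f1
  split_ifs with h
  · obtain ⟨h1, h2, h3⟩ := h.choose_spec
    have hr0 : S.R0 h.choose.2.2 h.choose.2.1.1 := S.ax_R1R0 _ _ _ h3
    rw [f0_graph S hr0 (S.R1_dom _ _ _ h3).2.2 h.choose.2.1.2]
    exact h2
  · rfl

theorem f3_f2 (x : A' S) : f3 S (f2 S x) = x := by
  classical
  match x with
  | Sum.inl a =>
    simp only [f2]
    split_ifs with h
    · have hr3 : S.R3 h.choose a.1 := S.ax_R2R3 _ _ h.choose_spec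
      simp only [f3]
      rw [dif_pos ⟨_, hr3⟩]
      have := S.R3_fun _ _ _ (Exists.choose_spec (⟨_, hr3⟩ : ∃ x', S.R3 h.choose x')) hr3
      exact congrArg Sum.inl (Subtype.ext this)
    · rfl
  | Sum.inr u => rfl

noncomputable def P : T0PlusModel (N S) where
  Q0 := fun n => match n with | .inl _ => True | _ => False
  Q1 := fun n => match n with | .inr (.inl _) => True | _ => False
  Q2 := fun n => match n with | .inr (.inr _) => True | _ => False
  F0 := fun n => match n with | .inr (.inl b) => .inl (f0 S b) | x => x
  F1 := fun n m => match n, m with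
    | .inr (.inr c), .inl a => .inr (.inl (f1 S c a))
    | n, _ => n
  F2 := fun n => match n with | .inl a => .inr (.inr (f2 S a)) | x => x
  F3 := fun n => match n with | .inr (.inr c) => .inl (f3 S c) | x => x
  partition_total := by rintro (a | b | c) <;> simp
  partition_01 := by rintro (a | b | c) <;> simp
  partition_02 := by rintro (a | b | c) <;> simp
  partition_12 := by rintro (a | b | c) <;> simp
  ax_F0 := by rintro (a | b | c) <;> simp
  ax_F1 := by rintro (a | b | c) (a' | b' | c') <;> simp
  ax_F2 := by rintro (a | b | c) <;> simp
  ax_F3 := by rintro (a | b | c) <;> simp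
  ax_F0F1 := by
    rintro (a | b | c) (a' | b' | c') <;> simp
    exact f0_f1 S c a'
  ax_F3F2 := by
    rintro (a | b | c) <;> simp
    exact f3_f2 S a

open Classical in
noncomputable def g (m : M) : N S :=
  if h0 : S.Q0 m then .inl (.inl ⟨m, h0⟩)
  else if h1 : S.Q1 m then .inr (.inl (.inl ⟨m, h1⟩))
  else .inr (.inr (.inl ⟨m, by
    rcases S.partition_total m with h | h | h
    exacts [absurd h h0, absurd h h1, h]⟩))

end T0Aux

namespace T0Aux
variable {M : Type} (S : T0Model M)

theorem f1_graph {z x y : M} (h : S.R1 z x y) (hz : S.Q2 z) (hx : S.Q0 x) (hy : S.Q1 y) :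
    f1 S (Sum.inl ⟨z, hz⟩) (Sum.inl ⟨x, hx⟩) = Sum.inl ⟨y, hy⟩ := by
  classical
  have hw : ∃ w : C S × A S × M, (Sum.inl w.1 : C' S) = Sum.inl ⟨z, hz⟩ ∧
      (Sum.inl w.2.1 : A' S) = Sum.inl ⟨x, hx⟩ ∧ S.R1 w.1.1 w.2.1.1 w.2.2 :=
    ⟨(⟨z, hz⟩, ⟨x, hx⟩, y), rfl, rfl, h⟩
  simp only [f1]
  rw [dif_pos hw]
  obtain ⟨h1, h2, h3⟩ := hw.choose_spec
  have e1 : hw.choose.1.1 = z := congrArg Subtype.val (Sum.inl_injective h1)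
  have e2 : hw.choose.2.1.1 = x := congrArg Subtype.val (Sum.inl_injective h2)
  rw [e1, e2] at h3
  exact congrArg Sum.inl (Subtype.ext (S.R1_fun _ _ _ _ h3 h))

theorem f2_graph {x z : M} (h : S.R2 x z) (hx : S.Q0 x) (hz : S.Q2 z) :
    f2 S (Sum.inl ⟨x, hx⟩) = Sum.inl ⟨z, hz⟩ := by
  classical
  simp only [f2]
  rw [dif_pos ⟨z, h⟩]
  exact congrArg Sum.inl (Subtype.ext
    (S.R2_fun _ _ _ (Exists.choose_spec (⟨z, h⟩ : ∃ z', S.R2 x z')) h))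

theorem f3_graph {z x : M} (h : S.R3 z x) (hz : S.Q2 z) (hx : S.Q0 x) :
    f3 S (Sum.inl ⟨z, hz⟩) = Sum.inl ⟨x, hx⟩ := by
  classical
  simp only [f3]
  rw [dif_pos ⟨x, h⟩]
  exact congrArg Sum.inl (Subtype.ext
    (S.R3_fun _ _ _ (Exists.choose_spec (⟨x, h⟩ : ∃ x', S.R3 z x')) h))

theorem g_q0 {m : M} (h : S.Q0 m) : g S m = .inl (.inl ⟨m, h⟩) := dif_pos h

theorem g_q1 {m : M} (h : S.Q1 m) : g S m = .inr (.inl (.inl ⟨m, h⟩)) := by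
  have h0 : ¬ S.Q0 m := fun h0 => S.partition_01 m ⟨h0, h⟩
  rw [g, dif_neg h0, dif_pos h]

theorem g_q2 {m : M} (h : S.Q2 m) : ∃ h', g S m = .inr (.inr (.inl ⟨m, h'⟩)) := by
  have h0 : ¬ S.Q0 m := fun h0 => S.partition_02 m ⟨h0, h⟩
  have h1 : ¬ S.Q1 m := fun h1 => S.partition_12 m ⟨h1, h⟩
  exact ⟨h, by rw [g, dif_neg h0, dif_neg h1]⟩

theorem g_inj : Function.Injective (g S) := by
  intro a b h
  unfold g at h
  split_ifs at h <;> simp_all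

end T0Aux


/-- Every model `M` of `T0` embeds into a model of `T0+`: there exist a model `N` of `T0+` and
an injection `g : M → N` preserving `Q0`, `Q1`, `Q2`, and such that whenever `R0 y x` holds in
`M` then `F0 (g y) = g x` in `N`, whenever `R1 z x y` holds in `M` then `F1 (g z) (g x) = g y`
in `N`, whenever `R2 x z` holds in `M` then `F2 (g x) = g z` in `N`, and whenever `R3 z x`
holds in `M` then `F3 (g z) = g x` in `N`. -/
theorem T0Model.embeds_into_t0PlusModel {M : Type} (S : T0Model M) :
    ∃ (N : Type) (P : T0PlusModel N) (g : M → N),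
      Function.Injective g ∧
      (∀ x, S.Q0 x → P.Q0 (g x)) ∧
      (∀ x, S.Q1 x → P.Q1 (g x)) ∧
      (∀ x, S.Q2 x → P.Q2 (g x)) ∧
      (∀ y x, S.R0 y x → P.F0 (g y) = g x) ∧
      (∀ z x y, S.R1 z x y → P.F1 (g z) (g x) = g y) ∧
      (∀ x z, S.R2 x z → P.F2 (g x) = g z) ∧
      (∀ z x, S.R3 z x → P.F3 (g z) = g x) := by
  classical
  refine ⟨T0Aux.N S, T0Aux.P S, T0Aux.g S, T0Aux.g_inj S, ?_, ?_, ?_, ?_, ?_, ?_, ?_⟩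
  · intro x hx; rw [T0Aux.g_q0 S hx]; trivial
  · intro x hx; rw [T0Aux.g_q1 S hx]; trivial
  · intro x hx; obtain ⟨h', e⟩ := T0Aux.g_q2 S hx; rw [e]; trivial
  · intro y x h
    obtain ⟨hy, hx⟩ := S.R0_dom y x h
    rw [T0Aux.g_q1 S hy, T0Aux.g_q0 S hx]
    show Sum.inl (T0Aux.f0 S (Sum.inl ⟨y, hy⟩)) = _
    rw [T0Aux.f0_graph S h hy hx]
  · intro z x y h
    obtain ⟨hz, hx, hy⟩ := S.R1_dom z x y h
    obtain ⟨h', e⟩ := T0Aux.g_q2 S hz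
    rw [e, T0Aux.g_q0 S hx, T0Aux.g_q1 S hy]
    show Sum.inr (Sum.inl (T0Aux.f1 S (Sum.inl ⟨z, h'⟩) (Sum.inl ⟨x, hx⟩))) = _
    rw [T0Aux.f1_graph S h h' hx hy]
  · intro x z h
    obtain ⟨hx, hz⟩ := S.R2_dom x z h
    obtain ⟨h', e⟩ := T0Aux.g_q2 S hz
    rw [T0Aux.g_q0 S hx, e]
    show Sum.inr (Sum.inr (T0Aux.f2 S (Sum.inl ⟨x, hx⟩))) = _
    rw [T0Aux.f2_graph S h hx h']
  · intro z x h
    obtain ⟨hz, hx⟩ := S.R3_dom z x h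
    obtain ⟨h', e⟩ := T0Aux.g_q2 S hz
    rw [e, T0Aux.g_q0 S hx]
    show Sum.inl (T0Aux.f3 S (Sum.inl ⟨z, h'⟩)) = _
    rw [T0Aux.f3_graph S h h' hx]
end

section
/- T0+ has the amalgamation property: for any models M0, M1, M2 of T0+ and embeddings f1 : M0 → M1 and f2 : M0 → M2, there exist a model M3 of T0+ and embeddings g1 : M1 → M3 and g2 : M2 → M3 with g1 ∘ f1 = g2 ∘ f2. Moreover, T0+ has the joint embedding property: for any two models M1, M2 of T0+ there is a model M3 of T0+ into which both M1 and M2 embed. -/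
/-- An embedding of models of `T0+`: an injective map preserving `Q0`, `Q1`, `Q2` and
commuting with `F0`, `F1`, `F2`, `F3`. -/
def T0PlusModel.IsEmbedding {M N : Type*} (S : T0PlusModel M) (S' : T0PlusModel N)
    (f : M → N) : Prop :=
  Function.Injective f ∧
  (∀ x, S.Q0 x ↔ S'.Q0 (f x)) ∧
  (∀ x, S.Q1 x ↔ S'.Q1 (f x)) ∧
  (∀ x, S.Q2 x ↔ S'.Q2 (f x)) ∧
  (∀ x, f (S.F0 x) = S'.F0 (f x)) ∧
  (∀ z x, f (S.F1 z x) = S'.F1 (f z) (f x)) ∧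
  (∀ x, f (S.F2 x) = S'.F2 (f x)) ∧
  (∀ z, f (S.F3 z) = S'.F3 (f z))

/-!
Glue `M1` and `M2` along `M0`. The glued set carries the predicates and the unary functions, and
`F1` on every pair taken from a single side; only the mixed pairs `(z, x)` are missing. For each
of them with `x` in `Q0` adjoin a fresh element of `Q1` and let `F0` send it to `x`: that is all
`T0+` asks of `F1 z x`, and a fresh element of `Q1` is subject to no other axiom. Joint embedding is
amalgamation over the empty model.
-/

open Function

universe u v w

namespace T0PlusModel.IsEmbedding

variable {M N : Type*} {S : T0PlusModel M} {S' : T0PlusModel N} {f : M → N}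

theorem injective (h : S.IsEmbedding S' f) : Injective f := h.1

theorem Q0_iff (h : S.IsEmbedding S' f) (x : M) : S.Q0 x ↔ S'.Q0 (f x) := h.2.1 x

theorem Q1_iff (h : S.IsEmbedding S' f) (x : M) : S.Q1 x ↔ S'.Q1 (f x) := h.2.2.1 x

theorem Q2_iff (h : S.IsEmbedding S' f) (x : M) : S.Q2 x ↔ S'.Q2 (f x) := h.2.2.2.1 x

theorem map_F0 (h : S.IsEmbedding S' f) (x : M) : f (S.F0 x) = S'.F0 (f x) := h.2.2.2.2.1 x

theorem map_F1 (h : S.IsEmbedding S' f) (z x : M) : f (S.F1 z x) = S'.F1 (f z) (f x) :=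
  h.2.2.2.2.2.1 z x

theorem map_F2 (h : S.IsEmbedding S' f) (x : M) : f (S.F2 x) = S'.F2 (f x) := h.2.2.2.2.2.2.1 x

theorem map_F3 (h : S.IsEmbedding S' f) (z : M) : f (S.F3 z) = S'.F3 (f z) := h.2.2.2.2.2.2.2 z

end T0PlusModel.IsEmbedding

/-- `F1 z x` is junk unless `Dom z x`. -/
structure PartialT0PlusModel (G : Type*) where
  Q0 : G → Prop
  Q1 : G → Prop
  Q2 : G → Prop
  F0 : G → G
  F1 : G → G → G
  F2 : G → G
  F3 : G → G
  Dom : G → G → Prop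
  partition_total : ∀ x, Q0 x ∨ Q1 x ∨ Q2 x
  partition_01 : ∀ x, ¬(Q0 x ∧ Q1 x)
  partition_02 : ∀ x, ¬(Q0 x ∧ Q2 x)
  partition_12 : ∀ x, ¬(Q1 x ∧ Q2 x)
  ax_F0 : ∀ x, Q1 x → Q0 (F0 x)
  ax_F1 : ∀ z x, Dom z x → Q2 z → Q0 x → Q1 (F1 z x)
  ax_F2 : ∀ x, Q0 x → Q2 (F2 x)
  ax_F3 : ∀ z, Q2 z → Q0 (F3 z)
  ax_F0F1 : ∀ z x, Dom z x → Q2 z → Q0 x → F0 (F1 z x) = x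
  ax_F3F2 : ∀ x, Q0 x → F3 (F2 x) = x

namespace PartialT0PlusModel

variable {M G : Type*}

structure IsEmbedding (S : T0PlusModel M) (P : PartialT0PlusModel G) (f : M → G) : Prop where
  injective : Injective f
  Q0_iff : ∀ x, S.Q0 x ↔ P.Q0 (f x)
  Q1_iff : ∀ x, S.Q1 x ↔ P.Q1 (f x)
  Q2_iff : ∀ x, S.Q2 x ↔ P.Q2 (f x)
  map_F0 : ∀ x, f (S.F0 x) = P.F0 (f x)
  dom : ∀ z x, P.Dom (f z) (f x)
  map_F1 : ∀ z x, f (S.F1 z x) = P.F1 (f z) (f x)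
  map_F2 : ∀ x, f (S.F2 x) = P.F2 (f x)
  map_F3 : ∀ z, f (S.F3 z) = P.F3 (f z)

variable (P : PartialT0PlusModel G)

/-- `Sum.inr (z, x)` is the value of `F1 z x` for `(z, x)` outside `Dom`; the surplus elements
of this form are harmless. -/
def Completion : Type _ := G ⊕ G × {x : G // P.Q0 x}

open Classical in
noncomputable def completionF1 : P.Completion → P.Completion → P.Completion
  | .inl z, .inl x =>
    if P.Dom z x then .inl (P.F1 z x) else if hx : P.Q0 x then .inr (z, ⟨x, hx⟩) else .inl x
  | _, x => x

variable {P} in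
theorem completionF1_of_dom {z x : G} (h : P.Dom z x) :
    P.completionF1 (.inl z) (.inl x) = .inl (P.F1 z x) :=
  if_pos h

variable {P} in
theorem completionF1_of_not_dom {z x : G} (h : ¬P.Dom z x) (hx : P.Q0 x) :
    P.completionF1 (.inl z) (.inl x) = .inr (z, ⟨x, hx⟩) :=
  (if_neg h).trans (dif_pos hx)

noncomputable def completion : T0PlusModel P.Completion where
  Q0 := Sum.elim P.Q0 fun _ => False
  Q1 := Sum.elim P.Q1 fun _ => True
  Q2 := Sum.elim P.Q2 fun _ => False
  F0 := Sum.elim (Sum.inl ∘ P.F0) fun c => .inl c.2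
  F1 := P.completionF1
  F2 := Sum.elim (Sum.inl ∘ P.F2) Sum.inr
  F3 := Sum.elim (Sum.inl ∘ P.F3) Sum.inr
  partition_total
    | .inl x => P.partition_total x
    | .inr _ => .inr (.inl trivial)
  partition_01
    | .inl x, h => P.partition_01 x h
    | .inr _, h => h.1
  partition_02
    | .inl x, h => P.partition_02 x h
    | .inr _, h => h.1
  partition_12
    | .inl x, h => P.partition_12 x h
    | .inr _, h => h.2
  ax_F0
    | .inl x, h => P.ax_F0 x h
    | .inr c, _ => c.2.2
  ax_F1 := by
    rintro (z | _) (x | _) hz hx <;> try contradiction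
    by_cases hd : P.Dom z x
    · rw [completionF1_of_dom hd]
      exact P.ax_F1 z x hd hz hx
    · rw [completionF1_of_not_dom hd hx]
      trivial
  ax_F2
    | .inl x, h => P.ax_F2 x h
    | .inr _, h => h.elim
  ax_F3
    | .inl z, h => P.ax_F3 z h
    | .inr _, h => h.elim
  ax_F0F1 := by
    rintro (z | _) (x | _) hz hx <;> try contradiction
    by_cases hd : P.Dom z x
    · rw [completionF1_of_dom hd]
      exact congrArg Sum.inl (P.ax_F0F1 z x hd hz hx)
    · rw [completionF1_of_not_dom hd hx]
      rfl
  ax_F3F2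
    | .inl x, h => congrArg Sum.inl (P.ax_F3F2 x h)
    | .inr _, h => h.elim

theorem IsEmbedding.inl_comp {S : T0PlusModel M} {P : PartialT0PlusModel G} {f : M → G}
    (hf : IsEmbedding S P f) : S.IsEmbedding P.completion (Sum.inl ∘ f) :=
  ⟨Sum.inl_injective.comp hf.injective, hf.Q0_iff, hf.Q1_iff, hf.Q2_iff,
    fun x => congrArg Sum.inl (hf.map_F0 x),
    fun z x => (congrArg Sum.inl (hf.map_F1 z x)).trans (completionF1_of_dom (hf.dom z x)).symm,
    fun x => congrArg Sum.inl (hf.map_F2 x), fun z => congrArg Sum.inl (hf.map_F3 z)⟩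

end PartialT0PlusModel

/-- The pushout of `f1` and `f2` in `Type`, when `f2` is injective. -/
abbrev SetPushout {M0 : Type u} {M2 : Type w} (M1 : Type v) (f2 : M0 → M2) : Type (max v w) :=
  M1 ⊕ {y : M2 // y ∉ Set.range f2}

namespace SetPushout

variable {M0 : Type u} {M1 : Type v} {M2 : Type w} (f1 : M0 → M1) (f2 : M0 → M2)

open Classical in
noncomputable def inr (y : M2) : SetPushout M1 f2 :=
  if h : y ∈ Set.range f2 then Sum.inl (f1 h.choose) else Sum.inr ⟨y, h⟩

def lift {X : Type*} (φ1 : M1 → X) (φ2 : M2 → X) : SetPushout M1 f2 → X :=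
  Sum.elim φ1 (φ2 ∘ Subtype.val)

noncomputable def map (F1 : M1 → M1) (F2 : M2 → M2) : SetPushout M1 f2 → SetPushout M1 f2 :=
  lift f2 (Sum.inl ∘ F1) (inr f1 f2 ∘ F2)

/-- Meaningful on pairs from a common side; a mixed pair `(z, x)` gets the junk value `x`. -/
noncomputable def map₂ (G1 : M1 → M1 → M1) (G2 : M2 → M2 → M2) (z x : SetPushout M1 f2) :
    SetPushout M1 f2 :=
  extend (Prod.map Sum.inl Sum.inl) (fun p => Sum.inl (G1 p.1 p.2))
    (extend (Prod.map (inr f1 f2) (inr f1 f2)) (fun q => inr f1 f2 (G2 q.1 q.2)) Prod.snd) (z, x)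

variable {f1 f2}

theorem inr_of_notMem {y : M2} (hy : y ∉ Set.range f2) : inr f1 f2 y = Sum.inr ⟨y, hy⟩ :=
  dif_neg hy

theorem exists_inr_eq_inl {y : M2} (hy : y ∈ Set.range f2) :
    ∃ x, f2 x = y ∧ inr f1 f2 y = Sum.inl (f1 x) :=
  ⟨hy.choose, hy.choose_spec, dif_pos hy⟩

theorem inr_comp (hf2 : Injective f2) (x : M0) : inr f1 f2 (f2 x) = Sum.inl (f1 x) := by
  obtain ⟨x', hx', h⟩ := exists_inr_eq_inl (f1 := f1) ⟨x, rfl⟩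
  rw [h, hf2 hx']

theorem exists_of_inl_eq_inr {a : M1} {y : M2} (h : Sum.inl a = inr f1 f2 y) :
    ∃ x, f1 x = a ∧ f2 x = y := by
  by_cases hy : y ∈ Set.range f2
  · obtain ⟨x, rfl, hx⟩ := exists_inr_eq_inl (f1 := f1) hy
    rw [hx, Sum.inl.injEq] at h
    exact ⟨x, h.symm, rfl⟩
  · rw [inr_of_notMem hy] at h
    exact absurd h Sum.inl_ne_inr

theorem inr_injective (hf1 : Injective f1) (hf2 : Injective f2) : Injective (inr f1 f2) := by
  intro y y' h
  by_cases hy : y ∈ Set.range f2 <;> by_cases hy' : y' ∈ Set.range f2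
  · obtain ⟨⟨x, rfl⟩, ⟨x', rfl⟩⟩ := And.intro hy hy'
    rw [inr_comp hf2, inr_comp hf2, Sum.inl.injEq] at h
    rw [hf1 h]
  · obtain ⟨x, rfl⟩ := hy
    rw [inr_comp hf2, inr_of_notMem hy'] at h
    exact absurd h Sum.inl_ne_inr
  · obtain ⟨x', rfl⟩ := hy'
    rw [inr_comp hf2, inr_of_notMem hy] at h
    exact absurd h Sum.inr_ne_inl
  · rw [inr_of_notMem hy, inr_of_notMem hy', Sum.inr.injEq, Subtype.mk.injEq] at h
    exact h

theorem inl_or_inr (u : SetPushout M1 f2) : (∃ a, Sum.inl a = u) ∨ ∃ y, inr f1 f2 y = u := by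
  rcases u with a | ⟨y, hy⟩
  · exact .inl ⟨a, rfl⟩
  · exact .inr ⟨y, inr_of_notMem hy⟩

theorem lift_inr_iff {P0 : M0 → Prop} {P1 : M1 → Prop} {P2 : M2 → Prop}
    (h1 : ∀ x, P0 x ↔ P1 (f1 x)) (h2 : ∀ x, P0 x ↔ P2 (f2 x)) (y : M2) :
    lift f2 P1 P2 (inr f1 f2 y) ↔ P2 y := by
  by_cases hy : y ∈ Set.range f2
  · obtain ⟨x, rfl, hx⟩ := exists_inr_eq_inl hy
    rw [hx]
    exact (h1 x).symm.trans (h2 x)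
  · rw [inr_of_notMem hy]
    rfl

theorem map_inr (hf2 : Injective f2) {F0 : M0 → M0} {F1 : M1 → M1} {F2 : M2 → M2}
    (h1 : ∀ x, f1 (F0 x) = F1 (f1 x)) (h2 : ∀ x, f2 (F0 x) = F2 (f2 x)) (y : M2) :
    map f1 f2 F1 F2 (inr f1 f2 y) = inr f1 f2 (F2 y) := by
  by_cases hy : y ∈ Set.range f2
  · obtain ⟨x, rfl, hx⟩ := exists_inr_eq_inl hy
    rw [hx, ← h2, inr_comp hf2]
    exact congrArg Sum.inl (h1 x).symm
  · rw [inr_of_notMem hy]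
    rfl

theorem map₂_inl (G1 : M1 → M1 → M1) (G2 : M2 → M2 → M2) (a b : M1) :
    map₂ f1 f2 G1 G2 (Sum.inl a) (Sum.inl b) = Sum.inl (G1 a b) :=
  (Sum.inl_injective.prodMap Sum.inl_injective).extend_apply _ _ (a, b)

theorem map₂_inr (hf1 : Injective f1) (hf2 : Injective f2) {G0 : M0 → M0 → M0}
    {G1 : M1 → M1 → M1} {G2 : M2 → M2 → M2} (h1 : ∀ z x, f1 (G0 z x) = G1 (f1 z) (f1 x))
    (h2 : ∀ z x, f2 (G0 z x) = G2 (f2 z) (f2 x)) (y y' : M2) :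
    map₂ f1 f2 G1 G2 (inr f1 f2 y) (inr f1 f2 y') = inr f1 f2 (G2 y y') := by
  by_cases h : ∃ p : M1 × M1, Prod.map Sum.inl Sum.inl p = (inr f1 f2 y, inr f1 f2 y')
  · obtain ⟨⟨a, b⟩, hab⟩ := h
    rw [Prod.map, Prod.mk.injEq] at hab
    obtain ⟨x, rfl, rfl⟩ := exists_of_inl_eq_inr hab.1
    obtain ⟨x', rfl, rfl⟩ := exists_of_inl_eq_inr hab.2
    rw [inr_comp hf2, inr_comp hf2, map₂_inl, ← h1, ← h2, inr_comp hf2]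
  · have hinj := (inr_injective hf1 hf2).prodMap (inr_injective hf1 hf2)
    rw [map₂, extend_apply' _ _ _ h]
    exact hinj.extend_apply _ _ (y, y')

end SetPushout

namespace T0PlusModel

open SetPushout

variable {M0 : Type u} {M1 : Type v} {M2 : Type w} {S0 : T0PlusModel M0} {S1 : T0PlusModel M1}
  {S2 : T0PlusModel M2} {f1 : M0 → M1} {f2 : M0 → M2}

noncomputable def pushout (hf1 : S0.IsEmbedding S1 f1) (hf2 : S0.IsEmbedding S2 f2) :
    PartialT0PlusModel (SetPushout M1 f2) where
  Q0 := lift f2 S1.Q0 S2.Q0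
  Q1 := lift f2 S1.Q1 S2.Q1
  Q2 := lift f2 S1.Q2 S2.Q2
  F0 := map f1 f2 S1.F0 S2.F0
  F1 := map₂ f1 f2 S1.F1 S2.F1
  F2 := map f1 f2 S1.F2 S2.F2
  F3 := map f1 f2 S1.F3 S2.F3
  Dom z x := (∃ a b, Sum.inl a = z ∧ Sum.inl b = x) ∨ ∃ y y', inr f1 f2 y = z ∧ inr f1 f2 y' = x
  partition_total u := by
    obtain ⟨a, rfl⟩ | ⟨y, rfl⟩ := inl_or_inr (f1 := f1) u
    · exact S1.partition_total a
    · rw [lift_inr_iff hf1.Q0_iff hf2.Q0_iff, lift_inr_iff hf1.Q1_iff hf2.Q1_iff,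
        lift_inr_iff hf1.Q2_iff hf2.Q2_iff]
      exact S2.partition_total y
  partition_01 u := by
    obtain ⟨a, rfl⟩ | ⟨y, rfl⟩ := inl_or_inr (f1 := f1) u
    · exact S1.partition_01 a
    · rw [lift_inr_iff hf1.Q0_iff hf2.Q0_iff, lift_inr_iff hf1.Q1_iff hf2.Q1_iff]
      exact S2.partition_01 y
  partition_02 u := by
    obtain ⟨a, rfl⟩ | ⟨y, rfl⟩ := inl_or_inr (f1 := f1) u
    · exact S1.partition_02 a
    · rw [lift_inr_iff hf1.Q0_iff hf2.Q0_iff, lift_inr_iff hf1.Q2_iff hf2.Q2_iff]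
      exact S2.partition_02 y
  partition_12 u := by
    obtain ⟨a, rfl⟩ | ⟨y, rfl⟩ := inl_or_inr (f1 := f1) u
    · exact S1.partition_12 a
    · rw [lift_inr_iff hf1.Q1_iff hf2.Q1_iff, lift_inr_iff hf1.Q2_iff hf2.Q2_iff]
      exact S2.partition_12 y
  ax_F0 u := by
    obtain ⟨a, rfl⟩ | ⟨y, rfl⟩ := inl_or_inr (f1 := f1) u
    · exact S1.ax_F0 a
    · rw [map_inr hf2.injective hf1.map_F0 hf2.map_F0, lift_inr_iff hf1.Q0_iff hf2.Q0_iff,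
        lift_inr_iff hf1.Q1_iff hf2.Q1_iff]
      exact S2.ax_F0 y
  ax_F1 := by
    rintro _ _ (⟨a, b, rfl, rfl⟩ | ⟨y, y', rfl, rfl⟩)
    · rw [map₂_inl]
      exact S1.ax_F1 a b
    · rw [map₂_inr hf1.injective hf2.injective hf1.map_F1 hf2.map_F1,
        lift_inr_iff hf1.Q0_iff hf2.Q0_iff, lift_inr_iff hf1.Q1_iff hf2.Q1_iff,
        lift_inr_iff hf1.Q2_iff hf2.Q2_iff]
      exact S2.ax_F1 y y'
  ax_F2 u := by
    obtain ⟨a, rfl⟩ | ⟨y, rfl⟩ := inl_or_inr (f1 := f1) u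
    · exact S1.ax_F2 a
    · rw [map_inr hf2.injective hf1.map_F2 hf2.map_F2, lift_inr_iff hf1.Q0_iff hf2.Q0_iff,
        lift_inr_iff hf1.Q2_iff hf2.Q2_iff]
      exact S2.ax_F2 y
  ax_F3 u := by
    obtain ⟨a, rfl⟩ | ⟨y, rfl⟩ := inl_or_inr (f1 := f1) u
    · exact S1.ax_F3 a
    · rw [map_inr hf2.injective hf1.map_F3 hf2.map_F3, lift_inr_iff hf1.Q0_iff hf2.Q0_iff,
        lift_inr_iff hf1.Q2_iff hf2.Q2_iff]
      exact S2.ax_F3 y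
  ax_F0F1 := by
    rintro _ _ (⟨a, b, rfl, rfl⟩ | ⟨y, y', rfl, rfl⟩)
    · rw [map₂_inl]
      exact fun hz hx => congrArg Sum.inl (S1.ax_F0F1 a b hz hx)
    · rw [map₂_inr hf1.injective hf2.injective hf1.map_F1 hf2.map_F1,
        lift_inr_iff hf1.Q0_iff hf2.Q0_iff, lift_inr_iff hf1.Q2_iff hf2.Q2_iff,
        map_inr hf2.injective hf1.map_F0 hf2.map_F0]
      exact fun hz hx => congrArg (inr f1 f2) (S2.ax_F0F1 y y' hz hx)
  ax_F3F2 u := by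
    obtain ⟨a, rfl⟩ | ⟨y, rfl⟩ := inl_or_inr (f1 := f1) u
    · exact fun hx => congrArg Sum.inl (S1.ax_F3F2 a hx)
    · rw [map_inr hf2.injective hf1.map_F2 hf2.map_F2,
        map_inr hf2.injective hf1.map_F3 hf2.map_F3, lift_inr_iff hf1.Q0_iff hf2.Q0_iff]
      exact fun hx => congrArg (inr f1 f2) (S2.ax_F3F2 y hx)

section

variable (hf1 : S0.IsEmbedding S1 f1) (hf2 : S0.IsEmbedding S2 f2)

theorem isEmbedding_pushout_inl : PartialT0PlusModel.IsEmbedding S1 (pushout hf1 hf2) Sum.inl where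
  injective := Sum.inl_injective
  Q0_iff _ := Iff.rfl
  Q1_iff _ := Iff.rfl
  Q2_iff _ := Iff.rfl
  map_F0 _ := rfl
  dom a b := .inl ⟨a, b, rfl, rfl⟩
  map_F1 a b := (map₂_inl _ _ a b).symm
  map_F2 _ := rfl
  map_F3 _ := rfl

theorem isEmbedding_pushout_inr :
    PartialT0PlusModel.IsEmbedding S2 (pushout hf1 hf2) (inr f1 f2) where
  injective := inr_injective hf1.injective hf2.injective
  Q0_iff y := (lift_inr_iff hf1.Q0_iff hf2.Q0_iff y).symm
  Q1_iff y := (lift_inr_iff hf1.Q1_iff hf2.Q1_iff y).symm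
  Q2_iff y := (lift_inr_iff hf1.Q2_iff hf2.Q2_iff y).symm
  map_F0 y := (map_inr hf2.injective hf1.map_F0 hf2.map_F0 y).symm
  dom y y' := .inr ⟨y, y', rfl, rfl⟩
  map_F1 y y' := (map₂_inr hf1.injective hf2.injective hf1.map_F1 hf2.map_F1 y y').symm
  map_F2 y := (map_inr hf2.injective hf1.map_F2 hf2.map_F2 y).symm
  map_F3 y := (map_inr hf2.injective hf1.map_F3 hf2.map_F3 y).symm

end

theorem exists_amalgam {M0 M1 M2 : Type u} {S0 : T0PlusModel M0} {S1 : T0PlusModel M1}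
    {S2 : T0PlusModel M2} {f1 : M0 → M1} {f2 : M0 → M2} (hf1 : S0.IsEmbedding S1 f1)
    (hf2 : S0.IsEmbedding S2 f2) :
    ∃ (M3 : Type u) (S3 : T0PlusModel M3) (g1 : M1 → M3) (g2 : M2 → M3),
      S1.IsEmbedding S3 g1 ∧ S2.IsEmbedding S3 g2 ∧ g1 ∘ f1 = g2 ∘ f2 :=
  ⟨_, (pushout hf1 hf2).completion, _, _, (isEmbedding_pushout_inl hf1 hf2).inl_comp,
    (isEmbedding_pushout_inr hf1 hf2).inl_comp,
    funext fun x => congrArg Sum.inl (inr_comp hf2.injective x).symm⟩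

def ofIsEmpty (M : Type*) [IsEmpty M] : T0PlusModel M where
  Q0 := isEmptyElim
  Q1 := isEmptyElim
  Q2 := isEmptyElim
  F0 := isEmptyElim
  F1 := isEmptyElim
  F2 := isEmptyElim
  F3 := isEmptyElim
  partition_total := isEmptyElim
  partition_01 := isEmptyElim
  partition_02 := isEmptyElim
  partition_12 := isEmptyElim
  ax_F0 := isEmptyElim
  ax_F1 := isEmptyElim
  ax_F2 := isEmptyElim
  ax_F3 := isEmptyElim
  ax_F0F1 := isEmptyElim
  ax_F3F2 := isEmptyElim

theorem isEmbedding_ofIsEmpty {M N : Type*} [IsEmpty M] (S : T0PlusModel N) (f : M → N) :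
    (ofIsEmpty M).IsEmbedding S f :=
  ⟨injective_of_subsingleton f, isEmptyElim, isEmptyElim, isEmptyElim, isEmptyElim, isEmptyElim,
    isEmptyElim, isEmptyElim⟩

end T0PlusModel

/-- `T0+` has the amalgamation property and the joint embedding property. -/
theorem t0Plus_amalgamation_and_jep :
    (∀ (M0 M1 M2 : Type) (S0 : T0PlusModel M0) (S1 : T0PlusModel M1) (S2 : T0PlusModel M2)
      (f1 : M0 → M1) (f2 : M0 → M2),
      S0.IsEmbedding S1 f1 → S0.IsEmbedding S2 f2 →
      ∃ (M3 : Type) (S3 : T0PlusModel M3) (g1 : M1 → M3) (g2 : M2 → M3),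
        S1.IsEmbedding S3 g1 ∧ S2.IsEmbedding S3 g2 ∧ g1 ∘ f1 = g2 ∘ f2) ∧
    (∀ (M1 M2 : Type) (S1 : T0PlusModel M1) (S2 : T0PlusModel M2),
      ∃ (M3 : Type) (S3 : T0PlusModel M3) (g1 : M1 → M3) (g2 : M2 → M3),
        S1.IsEmbedding S3 g1 ∧ S2.IsEmbedding S3 g2) := by
  refine ⟨fun _ _ _ _ _ _ _ _ => T0PlusModel.exists_amalgam, fun M1 M2 S1 S2 => ?_⟩
  obtain ⟨M3, S3, g1, g2, hg1, hg2, -⟩ :=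
    T0PlusModel.exists_amalgam
      (T0PlusModel.isEmbedding_ofIsEmpty S1 (isEmptyElim : Empty → M1))
      (T0PlusModel.isEmbedding_ofIsEmpty S2 isEmptyElim)
  exact ⟨M3, S3, g1, g2, hg1, hg2⟩
end

section
/- Let T be a complete theory and φ(z̄,ȳ,x̄) a formula such that T proves ∀z̄ x̄ ȳ1 ȳ2 (φ(z̄,ȳ1,x̄) ∧ φ(z̄,ȳ2,x̄) → ȳ1 = ȳ2). If there exist infinite cardinals λ0, κ0, a model M of T and tuples āᵢ (i < κ0), b̄_η (η ∈ κ0>λ0) and c̄_ν (ν ∈ κ0λ0) from M satisfying clauses (a) and (b) of the oak property, then for every pair of infinite cardinals λ, κ such witnesses exist; in particular T has the oak property witnessed by φ. -/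
/-!
By compactness. Add constants for the coordinates of the tuples `āᵢ`, `b̄_η`, `c̄_ν` indexed by
`κ` and `λ`; the theory `T` together with clauses (a) and (b) for these constants is finitely
satisfiable, because a finite fragment mentions only finitely many levels `S` and branches `B`,
and these can be pulled back from the given tree: `S` embeds order-preservingly into `κ₀`
(which has no largest element), and the finitely many values of the branches of `B` at the
levels of `S` embed injectively into `λ₀`. Branches that split at level `j` are then sent to
branches that split at the image of `j`, so clause (b) is preserved.
-/

/-- The theory `T` satisfies the oak property as exhibited by the formula `φ(z̄, ȳ, x̄)`:
(c) `T` proves that `φ(z̄, ȳ₁, x̄) ∧ φ(z̄, ȳ₂, x̄) → ȳ₁ = ȳ₂`, and for all infinite cardinals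
`κ`, `λ` there are a model `M` of `T` and tuples `āᵢ` (`i < κ`), `b̄_η` (`η ∈ κ>λ`) and `c̄_ν`
(`ν ∈ κλ`) from `M` such that (a) if `η ⊲ ν ∈ κλ` then `M ⊨ φ[c̄_ν, b̄_η, ā_{lg η}]`, and
(b) if `η⌢⟨α⟩ ⊲ ν₁ ∈ κλ`, `η⌢⟨β⟩ ⊲ ν₂ ∈ κλ` with `α ≠ β`, and `i > lg η`, then
`M ⊨ ¬∃ȳ (φ(c̄_{ν₁}, ȳ, āᵢ) ∧ φ(c̄_{ν₂}, ȳ, āᵢ))`. Here `κ>λ` is represented as the set of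
pairs of an `i < κ` together with a function from `{j < i}` to `λ`, and clause (b) is phrased
in terms of the branches `ν₁, ν₂`: they agree below `j = lg η` and differ at `j`. -/
def OakProperty {L : FirstOrder.Language.{0, 0}} (T : L.Theory) {dz dy dx : ℕ}
    (φ : L.Formula (Fin dz ⊕ Fin dy ⊕ Fin dx)) : Prop :=
  (∀ (M : FirstOrder.Language.Theory.ModelType.{0, 0, 0} T)
      (z : Fin dz → M) (y₁ y₂ : Fin dy → M) (x : Fin dx → M),
      φ.Realize (Sum.elim z (Sum.elim y₁ x)) → φ.Realize (Sum.elim z (Sum.elim y₂ x)) →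
        y₁ = y₂) ∧
  (∀ κ lam : Cardinal.{0}, Cardinal.aleph0 ≤ κ → Cardinal.aleph0 ≤ lam →
    ∃ (M : FirstOrder.Language.Theory.ModelType.{0, 0, 0} T)
      (a : κ.ord.ToType → Fin dx → M)
      (b : (Σ i : κ.ord.ToType, ({j : κ.ord.ToType // j < i} → lam.ord.ToType)) → Fin dy → M)
      (c : (κ.ord.ToType → lam.ord.ToType) → Fin dz → M),
      (∀ (ν : κ.ord.ToType → lam.ord.ToType) (i : κ.ord.ToType),
        φ.Realize (Sum.elim (c ν) (Sum.elim (b ⟨i, fun j => ν j.val⟩) (a i)))) ∧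
      (∀ (ν₁ ν₂ : κ.ord.ToType → lam.ord.ToType) (j : κ.ord.ToType),
        (∀ j' : κ.ord.ToType, j' < j → ν₁ j' = ν₂ j') → ν₁ j ≠ ν₂ j →
        ∀ i : κ.ord.ToType, j < i →
          ¬ ∃ y : Fin dy → M,
            φ.Realize (Sum.elim (c ν₁) (Sum.elim y (a i))) ∧
            φ.Realize (Sum.elim (c ν₂) (Sum.elim y (a i)))))

open FirstOrder FirstOrder.Language Set Finset

theorem Cardinal.infinite_ord_toType {c : Cardinal} (h : Cardinal.aleph0 ≤ c) :
    Infinite c.ord.ToType :=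
  Cardinal.infinite_iff.2 (by rwa [Cardinal.mk_ord_toType])

namespace Oak

section Combinatorics

variable {L : FirstOrder.Language.{0, 0}} {dz dy dx : ℕ}
  (φ : L.Formula (Fin dz ⊕ Fin dy ⊕ Fin dx)) {M : Type*} [L.Structure M] {A Λ A₀ Λ₀ : Type*}

/-- Clauses (a) and (b) of the oak property, restricted to the levels in `S` and the branches
in `B`. -/
def IsOakTreeOn [LT A] (S : Set A) (B : Set (A → Λ)) (a : A → Fin dx → M)
    (b : (Σ i : A, ({j : A // j < i} → Λ)) → Fin dy → M) (c : (A → Λ) → Fin dz → M) : Prop :=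
  (∀ ν ∈ B, ∀ i ∈ S, φ.Realize (Sum.elim (c ν) (Sum.elim (b ⟨i, fun j => ν j.val⟩) (a i)))) ∧
  (∀ ν₁ ∈ B, ∀ ν₂ ∈ B, ∀ j ∈ S, (∀ j' < j, ν₁ j' = ν₂ j') → ν₁ j ≠ ν₂ j → ∀ i ∈ S, j < i →
    ¬ ∃ y : Fin dy → M,
      φ.Realize (Sum.elim (c ν₁) (Sum.elim y (a i))) ∧
      φ.Realize (Sum.elim (c ν₂) (Sum.elim y (a i))))

theorem isOakTreeOn_univ_iff [LT A] {a : A → Fin dx → M}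
    {b : (Σ i : A, ({j : A // j < i} → Λ)) → Fin dy → M} {c : (A → Λ) → Fin dz → M} :
    IsOakTreeOn φ univ univ a b c ↔
      (∀ ν i, φ.Realize (Sum.elim (c ν) (Sum.elim (b ⟨i, fun j => ν j.val⟩) (a i)))) ∧
      (∀ ν₁ ν₂ j, (∀ j' < j, ν₁ j' = ν₂ j') → ν₁ j ≠ ν₂ j → ∀ i, j < i →
        ¬ ∃ y : Fin dy → M,
          φ.Realize (Sum.elim (c ν₁) (Sum.elim y (a i))) ∧
          φ.Realize (Sum.elim (c ν₂) (Sum.elim y (a i)))) := by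
  simp only [IsOakTreeOn, mem_univ, forall_const]

/-- Counting the elements of `S` below a point embeds `S` into any `ℕ`-sequence. -/
theorem exists_strictMonoOn_finset [Preorder A] [Preorder A₀] [Nonempty A₀] [NoMaxOrder A₀]
    (S : Finset A) : ∃ e : A → A₀, StrictMonoOn e S := by
  classical
  obtain ⟨f, hf⟩ := Nat.exists_strictMono A₀
  refine ⟨fun a => f #{x ∈ S | x < a}, fun a ha a' _ hlt => hf (Finset.card_lt_card ?_)⟩
  refine (Finset.ssubset_iff_of_subset fun x hx => ?_).2 ⟨a, ?_, ?_⟩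
  · simp only [Finset.mem_filter] at hx ⊢
    exact ⟨hx.1, hx.2.trans hlt⟩
  · simpa [Finset.mem_filter] using ⟨ha, hlt⟩
  · simp

theorem exists_branchMap [LinearOrder A] [Preorder A₀] [Infinite Λ₀] {S : Set A}
    {B : Set (A → Λ)} (hS : S.Finite) (hB : B.Finite) {e : A → A₀} (he : StrictMonoOn e S) :
    ∃ E : (A → Λ) → A₀ → Λ₀,
      (∀ ν ν', ∀ i ∈ S, (∀ j < i, ν j = ν' j) → ∀ j₀ < e i, E ν j₀ = E ν' j₀) ∧
      (∀ ν ∈ B, ∀ ν' ∈ B, ∀ j ∈ S, ν j ≠ ν' j → E ν (e j) ≠ E ν' (e j)) := by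
  classical
  obtain ⟨g, hg⟩ : ∃ g : Λ → Λ₀, InjOn g (image2 (fun ν j => ν j) B S) := by
    obtain ⟨g, hg⟩ := countable_iff_exists_injOn.1 (hB.image2 _ hS).countable
    exact ⟨Infinite.natEmbedding Λ₀ ∘ g, (Infinite.natEmbedding Λ₀).injective.comp_injOn hg⟩
  let E : (A → Λ) → A₀ → Λ₀ := fun ν j₀ =>
    if h : j₀ ∈ e '' S then g (ν h.choose) else Classical.arbitrary Λ₀
  have hE : ∀ ν, ∀ j ∈ S, E ν (e j) = g (ν j) := by
    intro ν j hj
    have h : e j ∈ e '' S := mem_image_of_mem e hj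
    simp only [E, dif_pos h, he.injOn h.choose_spec.1 hj h.choose_spec.2]
  refine ⟨E, fun ν ν' i hi hν j₀ hj₀ => ?_, fun ν hν ν' hν' j hj hne => ?_⟩
  · by_cases h : j₀ ∈ e '' S
    · obtain ⟨j, hj, rfl⟩ := h
      rw [hE ν j hj, hE ν' j hj, hν j ((he.lt_iff_lt hj hi).1 hj₀)]
    · simp only [E, dif_neg h]
  · rw [hE ν j hj, hE ν' j hj]
    exact hg.ne (mem_image2_of_mem hν hj) (mem_image2_of_mem hν' hj) hne

theorem IsOakTreeOn.comap [Preorder A] [Nonempty Λ] [Preorder A₀] {S : Set A}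
    {B : Set (A → Λ)} {a₀ : A₀ → Fin dx → M}
    {b₀ : (Σ i : A₀, ({j : A₀ // j < i} → Λ₀)) → Fin dy → M} {c₀ : (A₀ → Λ₀) → Fin dz → M}
    (h : IsOakTreeOn φ univ univ a₀ b₀ c₀) {e : A → A₀} (he : StrictMonoOn e S)
    {E : (A → Λ) → A₀ → Λ₀}
    (hagree : ∀ ν ν', ∀ i ∈ S, (∀ j < i, ν j = ν' j) → ∀ j₀ < e i, E ν j₀ = E ν' j₀)
    (hsep : ∀ ν ∈ B, ∀ ν' ∈ B, ∀ j ∈ S, ν j ≠ ν' j → E ν (e j) ≠ E ν' (e j)) :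
    IsOakTreeOn φ S B (fun i => a₀ (e i))
      -- `b̄_η` is read off any branch extending `η`: by `hagree` the choice does not matter
      (fun η => b₀ ⟨e η.1, fun j₀ =>
        E (Function.extend Subtype.val η.2 fun _ => Classical.arbitrary Λ) j₀⟩)
      (fun ν => c₀ (E ν)) := by
  rw [isOakTreeOn_univ_iff] at h
  refine ⟨fun ν _ i hi => ?_, fun ν₁ hν₁ ν₂ hν₂ j hj hagree_j hne i hi hji => ?_⟩
  · convert h.1 (E ν) (e i) using 6 with j₀
    refine hagree _ ν i hi (fun j hj => ?_) j₀ j₀.2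
    exact Subtype.val_injective.extend_apply _ _ ⟨j, hj⟩
  · exact h.2 (E ν₁) (E ν₂) (e j) (hagree ν₁ ν₂ j hj hagree_j) (hsep ν₁ hν₁ ν₂ hν₂ j hj hne)
      (e i) (he hj hi hji)

theorem exists_isOakTreeOn_finset [LinearOrder A] [Nonempty Λ] [Preorder A₀] [Nonempty A₀]
    [NoMaxOrder A₀] [Infinite Λ₀] {a₀ : A₀ → Fin dx → M}
    {b₀ : (Σ i : A₀, ({j : A₀ // j < i} → Λ₀)) → Fin dy → M} {c₀ : (A₀ → Λ₀) → Fin dz → M}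
    (h : IsOakTreeOn φ univ univ a₀ b₀ c₀) (S : Finset A) (B : Finset (A → Λ)) :
    ∃ (a : A → Fin dx → M) (b : (Σ i : A, ({j : A // j < i} → Λ)) → Fin dy → M)
      (c : (A → Λ) → Fin dz → M), IsOakTreeOn φ S B a b c := by
  obtain ⟨e, he⟩ := exists_strictMonoOn_finset (A₀ := A₀) S
  obtain ⟨E, hagree, hsep⟩ :=
    exists_branchMap (Λ₀ := Λ₀) S.finite_toSet B.finite_toSet he (B := (B : Set (A → Λ)))
  exact ⟨_, _, _, h.comap φ he hagree hsep⟩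

end Combinatorics

section Diagram

variable {L : FirstOrder.Language.{0, 0}} {dz dy dx : ℕ}
  (φ : L.Formula (Fin dz ⊕ Fin dy ⊕ Fin dx)) {A Λ : Type} [LT A]

/-- Constants naming the coordinates of the tuples `āᵢ`, `b̄_η` and `c̄_ν`. -/
abbrev OakConstants (dz dy dx : ℕ) (A Λ : Type) [LT A] : Type :=
  (A × Fin dx) ⊕ ((Σ i : A, ({j : A // j < i} → Λ)) × Fin dy) ⊕ ((A → Λ) × Fin dz)

local notation "𝒞" => OakConstants dz dy dx A Λ

/-- `φ(c̄_ν, ȳ, āᵢ)` -/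
noncomputable def oakFormula (ν : A → Λ) (i : A) : (L[[𝒞]]).Formula (Fin dy) :=
  ((L.lhomWithConstants _).onFormula φ).subst
    (Sum.elim (fun t => (L.con (Sum.inr (Sum.inr (ν, t)))).term)
      (Sum.elim Term.var fun t => (L.con (Sum.inl (i, t))).term))

noncomputable def oakTheory (T : L.Theory) (S : Set A) (B : Set (A → Λ)) : (L[[𝒞]]).Theory :=
  (L.lhomWithConstants _).onTheory T ∪
  {ψ | ∃ ν ∈ B, ∃ i ∈ S, ψ = (oakFormula φ ν i).subst
    fun t => (L.con (Sum.inr (Sum.inl (⟨i, fun j => ν j.val⟩, t)))).term} ∪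
  {ψ | ∃ ν₁ ∈ B, ∃ ν₂ ∈ B, ∃ j ∈ S, (∀ j' < j, ν₁ j' = ν₂ j') ∧ ν₁ j ≠ ν₂ j ∧ ∃ i ∈ S, j < i ∧
    ψ = ∼(((oakFormula φ ν₁ i ⊓ oakFormula φ ν₂ i).relabel Sum.inr).iExs (Fin dy))}

variable {M : Type}

def tupleA (v : 𝒞 → M) (i : A) (t : Fin dx) : M := v (Sum.inl (i, t))

def tupleB (v : 𝒞 → M) (η : Σ i : A, ({j : A // j < i} → Λ)) (t : Fin dy) : M :=
  v (Sum.inr (Sum.inl (η, t)))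

def tupleC (v : 𝒞 → M) (ν : A → Λ) (t : Fin dz) : M :=
  v (Sum.inr (Sum.inr (ν, t)))

variable (L M) in
def constInterp (α : Type) [(L[[α]]).Structure M] (g : α) : M := (L.con g : (L[[α]]).Constants)

variable [L.Structure M] [(L[[OakConstants dz dy dx A Λ]]).Structure M]
  [(L.lhomWithConstants (OakConstants dz dy dx A Λ)).IsExpansionOn M]

theorem realize_oakFormula (ν : A → Λ) (i : A) (y : Fin dy → M) :
    (oakFormula φ ν i).Realize y ↔
      φ.Realize (Sum.elim (tupleC (constInterp L M 𝒞) ν)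
        (Sum.elim y (tupleA (constInterp L M 𝒞) i))) := by
  rw [oakFormula, Formula.Realize, BoundedFormula.realize_subst, LHom.onFormula,
    LHom.realize_onBoundedFormula, ← Formula.Realize]
  congr! with v
  rcases v with t | t | t <;>
    simp [tupleA, tupleC, constInterp, Term.realize_constants, constantMap]

theorem model_oakTheory_iff {T : L.Theory} {S : Set A} {B : Set (A → Λ)} :
    M ⊨ oakTheory φ T S B ↔ M ⊨ T ∧
      IsOakTreeOn φ S B (tupleA (constInterp L M 𝒞)) (tupleB (constInterp L M 𝒞))
        (tupleC (constInterp L M 𝒞)) := by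
  have realize_a (ν : A → Λ) (i : A) : M ⊨ ((oakFormula φ ν i).subst fun t =>
      (L.con (Sum.inr (Sum.inl (⟨i, fun j => ν j.val⟩, t)))).term : (L[[𝒞]]).Sentence) ↔
      (oakFormula φ ν i).Realize (tupleB (constInterp L M 𝒞) ⟨i, fun j => ν j.val⟩) := by
    rw [Sentence.Realize, Formula.Realize, BoundedFormula.realize_subst, ← Formula.Realize]
    congr! with t
    simp [tupleB, constInterp, Term.realize_constants, constantMap]
  have realize_b (ν₁ ν₂ : A → Λ) (i : A) :
      M ⊨ (((oakFormula φ ν₁ i ⊓ oakFormula φ ν₂ i).relabel Sum.inr).iExs (Fin dy) :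
        (L[[𝒞]]).Sentence) ↔
      ∃ y : Fin dy → M, (oakFormula φ ν₁ i).Realize y ∧ (oakFormula φ ν₂ i).Realize y := by
    rw [Sentence.Realize, Formula.realize_iExs]
    simp only [Formula.realize_relabel, Sum.elim_comp_inr, Formula.realize_inf]
  rw [oakTheory, Theory.model_union_iff, Theory.model_union_iff, LHom.onTheory_model, and_assoc,
    IsOakTreeOn]
  simp only [Theory.model_iff]
  refine and_congr_right fun _ => and_congr ⟨fun h ν hν i hi => ?_, ?_⟩ ⟨fun h => ?_, ?_⟩
  · exact (realize_oakFormula φ ν i _).1 ((realize_a ν i).1 (h _ ⟨ν, hν, i, hi, rfl⟩))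
  · rintro h _ ⟨ν, hν, i, hi, rfl⟩
    exact (realize_a ν i).2 ((realize_oakFormula φ ν i _).2 (h ν hν i hi))
  · intro ν₁ hν₁ ν₂ hν₂ j hj hagree hne i hi hji
    have := h _ ⟨ν₁, hν₁, ν₂, hν₂, j, hj, hagree, hne, i, hi, hji, rfl⟩
    simpa only [Sentence.realize_not, realize_b, realize_oakFormula] using this
  · rintro h _ ⟨ν₁, hν₁, ν₂, hν₂, j, hj, hagree, hne, i, hi, hji, rfl⟩
    simpa only [Sentence.realize_not, realize_b, realize_oakFormula]
      using h ν₁ hν₁ ν₂ hν₂ j hj hagree hne i hi hji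

end Diagram

section Compactness

variable {L : FirstOrder.Language.{0, 0}} {dz dy dx : ℕ}
  {φ : L.Formula (Fin dz ⊕ Fin dy ⊕ Fin dx)} {T : L.Theory} {A Λ : Type} [LT A]

theorem isSatisfiable_oakTheory {S : Set A} {B : Set (A → Λ)}
    (M : Theory.ModelType.{0, 0, 0} T) {a : A → Fin dx → M}
    {b : (Σ i : A, ({j : A // j < i} → Λ)) → Fin dy → M}
    {c : (A → Λ) → Fin dz → M} (h : IsOakTreeOn φ S B a b c) :
    (oakTheory φ T S B).IsSatisfiable := by
  let := constantsOn.structure (Sum.elim (Function.uncurry a)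
    (Sum.elim (Function.uncurry b) (Function.uncurry c)))
  have : M ⊨ oakTheory φ T S B := model_oakTheory_iff φ |>.2 ⟨M.is_model, h⟩
  exact Theory.Model.isSatisfiable M

theorem exists_isOakTreeOn_of_isSatisfiable {S : Set A} {B : Set (A → Λ)}
    (h : (oakTheory φ T S B).IsSatisfiable) :
    ∃ (M : Theory.ModelType.{0, 0, 0} T) (a : A → Fin dx → M)
      (b : (Σ i : A, ({j : A // j < i} → Λ)) → Fin dy → M) (c : (A → Λ) → Fin dz → M),
      IsOakTreeOn φ S B a b c := by
  obtain ⟨N⟩ := h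
  let := (L.lhomWithConstants (OakConstants dz dy dx A Λ)).reduct N
  have hN := model_oakTheory_iff (M := N) φ |>.1 N.is_model
  have := hN.1
  exact ⟨.of T N, _, _, _, hN.2⟩

theorem oakTheory_mono {S S' : Set A} {B B' : Set (A → Λ)} (hS : S ⊆ S') (hB : B ⊆ B') :
    oakTheory φ T S B ⊆ oakTheory φ T S' B' := by
  rintro ψ ((hψ | ⟨ν, hν, i, hi, rfl⟩) | ⟨ν₁, hν₁, ν₂, hν₂, j, hj, hagree, hne, i, hi, hji, rfl⟩)
  · exact Or.inl (Or.inl hψ)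
  · exact Or.inl (Or.inr ⟨ν, hB hν, i, hS hi, rfl⟩)
  · exact Or.inr ⟨ν₁, hB hν₁, ν₂, hB hν₂, j, hS hj, hagree, hne, i, hS hi, hji, rfl⟩

theorem oakTheory_univ_subset_iUnion :
    oakTheory φ T univ univ ⊆
      ⋃ F : Finset A × Finset (A → Λ), oakTheory φ T (F.1 : Set A) (F.2 : Set (A → Λ)) := by
  classical
  rintro ψ ((hψ | ⟨ν, -, i, -, rfl⟩) | ⟨ν₁, -, ν₂, -, j, -, hagree, hne, i, -, hji, rfl⟩)
  · exact mem_iUnion.2 ⟨(∅, ∅), Or.inl (Or.inl hψ)⟩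
  · exact mem_iUnion.2 ⟨({i}, {ν}), Or.inl (Or.inr ⟨ν, by simp, i, by simp, rfl⟩)⟩
  · exact mem_iUnion.2 ⟨({j, i}, {ν₁, ν₂}),
      Or.inr ⟨ν₁, by simp, ν₂, by simp, j, by simp, hagree, hne, i, by simp, hji, rfl⟩⟩

theorem isSatisfiable_oakTheory_univ
    (h : ∀ (S : Finset A) (B : Finset (A → Λ)),
      (oakTheory φ T S (B : Set (A → Λ))).IsSatisfiable) :
    (oakTheory φ T (univ : Set A) (univ : Set (A → Λ))).IsSatisfiable := by
  classical
  refine Theory.IsSatisfiable.mono ?_ oakTheory_univ_subset_iUnion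
  have hmono : Monotone fun F : Finset A × Finset (A → Λ) =>
      oakTheory φ T (F.1 : Set A) (F.2 : Set (A → Λ)) :=
    fun F F' hF => oakTheory_mono (Finset.coe_subset.2 hF.1) (Finset.coe_subset.2 hF.2)
  exact (Theory.isSatisfiable_directed_union_iff hmono.directed_le).2 fun F => h F.1 F.2

end Compactness

variable {L : FirstOrder.Language.{0, 0}} {dz dy dx : ℕ}
  {φ : L.Formula (Fin dz ⊕ Fin dy ⊕ Fin dx)} {T : L.Theory}

theorem exists_isOakTreeOn_univ {A Λ A₀ Λ₀ : Type} [LinearOrder A] [Nonempty Λ] [Preorder A₀]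
    [Nonempty A₀] [NoMaxOrder A₀] [Infinite Λ₀] {M₀ : Theory.ModelType.{0, 0, 0} T}
    {a₀ : A₀ → Fin dx → M₀} {b₀ : (Σ i : A₀, ({j : A₀ // j < i} → Λ₀)) → Fin dy → M₀}
    {c₀ : (A₀ → Λ₀) → Fin dz → M₀} (h : IsOakTreeOn φ univ univ a₀ b₀ c₀) :
    ∃ (M : Theory.ModelType.{0, 0, 0} T) (a : A → Fin dx → M)
      (b : (Σ i : A, ({j : A // j < i} → Λ)) → Fin dy → M) (c : (A → Λ) → Fin dz → M),
      IsOakTreeOn φ univ univ a b c :=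
  exists_isOakTreeOn_of_isSatisfiable <| isSatisfiable_oakTheory_univ fun S B =>
    have ⟨_, _, _, hSB⟩ := exists_isOakTreeOn_finset φ h S B
    isSatisfiable_oakTheory M₀ hSB

end Oak

theorem oakProperty_of_exists_general {L : FirstOrder.Language.{0, 0}} (T : L.Theory)
    {dz dy dx : ℕ} (φ : L.Formula (Fin dz ⊕ Fin dy ⊕ Fin dx))
    (huniq : ∀ (M : FirstOrder.Language.Theory.ModelType.{0, 0, 0} T)
      (z : Fin dz → M) (y₁ y₂ : Fin dy → M) (x : Fin dx → M),
      φ.Realize (Sum.elim z (Sum.elim y₁ x)) → φ.Realize (Sum.elim z (Sum.elim y₂ x)) →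
        y₁ = y₂)
    (hexists : ∃ κ₀ lam₀ : Cardinal.{0}, Cardinal.aleph0 ≤ κ₀ ∧ Cardinal.aleph0 ≤ lam₀ ∧
      ∃ (M : FirstOrder.Language.Theory.ModelType.{0, 0, 0} T)
        (a : κ₀.ord.ToType → Fin dx → M)
        (b : (Σ i : κ₀.ord.ToType, ({j : κ₀.ord.ToType // j < i} → lam₀.ord.ToType)) →
          Fin dy → M)
        (c : (κ₀.ord.ToType → lam₀.ord.ToType) → Fin dz → M),
        (∀ (ν : κ₀.ord.ToType → lam₀.ord.ToType) (i : κ₀.ord.ToType),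
          φ.Realize (Sum.elim (c ν) (Sum.elim (b ⟨i, fun j => ν j.val⟩) (a i)))) ∧
        (∀ (ν₁ ν₂ : κ₀.ord.ToType → lam₀.ord.ToType) (j : κ₀.ord.ToType),
          (∀ j' : κ₀.ord.ToType, j' < j → ν₁ j' = ν₂ j') → ν₁ j ≠ ν₂ j →
          ∀ i : κ₀.ord.ToType, j < i →
            ¬ ∃ y : Fin dy → M,
              φ.Realize (Sum.elim (c ν₁) (Sum.elim y (a i))) ∧
              φ.Realize (Sum.elim (c ν₂) (Sum.elim y (a i))))) :
    OakProperty T φ := by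
  obtain ⟨κ₀, lam₀, hκ₀, hlam₀, M₀, a₀, b₀, c₀, h₀⟩ := hexists
  have := Cardinal.noMaxOrder hκ₀
  have := (Cardinal.infinite_ord_toType hκ₀).nonempty
  have := Cardinal.infinite_ord_toType hlam₀
  refine ⟨huniq, fun κ lam _ hlam => ?_⟩
  have := (Cardinal.infinite_ord_toType hlam).nonempty
  obtain ⟨M, a, b, c, h⟩ := Oak.exists_isOakTreeOn_univ (A := κ.ord.ToType)
    (Λ := lam.ord.ToType) ((Oak.isOakTreeOn_univ_iff φ).2 h₀)
  exact ⟨M, a, b, c, (Oak.isOakTreeOn_univ_iff φ).1 h⟩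

/-- If the formula `φ` satisfies the uniqueness condition (c) and clauses (a) and (b) of the
oak property hold for some pair of infinite cardinals `κ₀`, `λ₀`, then they hold for every
pair of infinite cardinals; in particular `T` has the oak property witnessed by `φ`. -/
theorem oakProperty_of_exists {L : FirstOrder.Language.{0, 0}} (T : L.Theory)
    (hT : T.IsComplete) {dz dy dx : ℕ} (φ : L.Formula (Fin dz ⊕ Fin dy ⊕ Fin dx))
    (huniq : ∀ (M : FirstOrder.Language.Theory.ModelType.{0, 0, 0} T)
      (z : Fin dz → M) (y₁ y₂ : Fin dy → M) (x : Fin dx → M),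
      φ.Realize (Sum.elim z (Sum.elim y₁ x)) → φ.Realize (Sum.elim z (Sum.elim y₂ x)) →
        y₁ = y₂)
    (hexists : ∃ κ₀ lam₀ : Cardinal.{0}, Cardinal.aleph0 ≤ κ₀ ∧ Cardinal.aleph0 ≤ lam₀ ∧
      ∃ (M : FirstOrder.Language.Theory.ModelType.{0, 0, 0} T)
        (a : κ₀.ord.ToType → Fin dx → M)
        (b : (Σ i : κ₀.ord.ToType, ({j : κ₀.ord.ToType // j < i} → lam₀.ord.ToType)) →
          Fin dy → M)
        (c : (κ₀.ord.ToType → lam₀.ord.ToType) → Fin dz → M),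
        (∀ (ν : κ₀.ord.ToType → lam₀.ord.ToType) (i : κ₀.ord.ToType),
          φ.Realize (Sum.elim (c ν) (Sum.elim (b ⟨i, fun j => ν j.val⟩) (a i)))) ∧
        (∀ (ν₁ ν₂ : κ₀.ord.ToType → lam₀.ord.ToType) (j : κ₀.ord.ToType),
          (∀ j' : κ₀.ord.ToType, j' < j → ν₁ j' = ν₂ j') → ν₁ j ≠ ν₂ j →
          ∀ i : κ₀.ord.ToType, j < i →
            ¬ ∃ y : Fin dy → M,
              φ.Realize (Sum.elim (c ν₁) (Sum.elim y (a i))) ∧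
              φ.Realize (Sum.elim (c ν₂) (Sum.elim y (a i))))) :
    OakProperty T φ :=
  oakProperty_of_exists_general T φ huniq hexists
end

section
/- If κ is an uncountable regular cardinal with κ = cf(μ) < μ, and θ^κ < μ for every cardinal θ < μ, then U_{Jbdκ}(μ) = μ^κ. -/
/-!
Send `f : κ → μ` to its branch `{f ↾ [0, i] : i < κ}` in the tree of restrictions of functions
`κ → μ` to initial segments. The tree has only `μ` nodes: a restriction to fewer than `κ = cf μ`
points is bounded below `μ`, and `θ ^ κ < μ` for `θ < μ`. A set of `κ` common nodes of two
branches is cofinal in `κ`, so it forces the branches to agree. Hence a member `a` of a covering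
family `P` meets each branch it covers in a `κ`-subset of `a` that determines the branch, giving
`μ ^ κ ≤ |P| · 2 ^ κ`; since `2 ^ κ < μ ≤ μ ^ κ`, this forces `μ ^ κ ≤ |P|`. The family of all
`κ`-subsets of `μ` attains the bound.
-/

/-- `U_{J^bd_κ}(μ)`: the least cardinality of a family `P` of subsets of `μ` of cardinality
`κ` such that every `b ∈ [μ]^κ` has intersection of full cardinality `κ` with some member
of `P`. -/
noncomputable def UJbd (κ μ : Cardinal.{0}) : Cardinal.{0} :=
  sInf {c : Cardinal.{0} | ∃ P : Set (Set μ.ord.ToType),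
    Cardinal.mk P = c ∧ (∀ A ∈ P, Cardinal.mk A = κ) ∧
    ∀ b : Set μ.ord.ToType, Cardinal.mk b = κ →
      ∃ a ∈ P, Cardinal.mk ↥(a ∩ b) = κ}

open Cardinal Set

universe u

namespace Cardinal

theorem power_le_self_of_lt_cof {μ ν : Cardinal.{u}} (hμ : ℵ₀ ≤ μ) (hν : ν < μ.ord.cof)
    (hpow : ∀ θ < μ, θ ^ ν ≤ μ) : μ ^ ν ≤ μ := by
  induction ν using Cardinal.inductionOn with | _ D
  set α := μ.ord.ToType
  have hbdd : ∀ f : D → α, ∃ a, ∀ x, f x < a := by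
    intro f
    have hf : ¬ IsCofinal (range f) := fun h =>
      (Order.cof_le h).not_gt (by rw [Ordinal.cof_toType]; exact mk_range_le.trans_lt hν)
    simpa [not_isCofinal_iff] using hf
  choose bound hbound using hbdd
  have hinj : Function.Injective fun f : D → α => (⟨bound f, fun x => ⟨f x, hbound f x⟩⟩ :
      Σ a : α, D → Iio a) := by
    intro f g h
    funext x
    exact congrArg (fun p : Σ a : α, D → Iio a => (p.2 x).1) h
  calc μ ^ #D = #(D → α) := by rw [← power_def, mk_ord_toType]
    _ ≤ sum fun a : α => #(Iio a) ^ #D := by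
        simpa only [mk_sigma, power_def] using mk_le_of_injective hinj
    _ ≤ sum fun _ : α => μ :=
        sum_le_sum _ _ fun a => hpow _ ((mk_Iio_lt a (by simp [α])).trans_eq (mk_ord_toType μ))
    _ = μ := by rw [sum_const', mk_ord_toType, mul_eq_self hμ]

end Cardinal

section Branch

variable {ι α β : Type u} [LinearOrder ι]

abbrev Node (ι α : Type u) [LinearOrder ι] := Σ i : ι, (Iic i → α)

def branch (e : Node ι α ↪ β) (f : ι → α) : Set β :=
  range fun i => e ⟨i, fun j => f j⟩

theorem mk_branch (e : Node ι α ↪ β) (f : ι → α) : #(branch e f) = #ι :=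
  mk_range_eq _ fun _ _ h => congrArg Sigma.fst (e.injective h)

theorem eq_of_mk_Iio_lt_mk_inter_branch (e : Node ι α ↪ β) {f g : ι → α}
    (h : ∀ i : ι, #(Iio i) < #(branch e f ∩ branch e g : Set β)) : f = g := by
  funext i
  obtain ⟨j, hij, hj⟩ : ∃ j, i ≤ j ∧ e ⟨j, fun k => f k⟩ ∈ branch e g := by
    by_contra! hnot
    have hsub : branch e f ∩ branch e g ⊆ (fun j => e ⟨j, fun k => f k⟩) '' Iio i := by
      rintro _ ⟨⟨j, rfl⟩, hg⟩
      exact ⟨j, not_le.mp fun hij => hnot j hij hg, rfl⟩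
    exact (h i).not_ge ((mk_le_mk_of_subset hsub).trans mk_image_le)
  obtain ⟨j', hj'⟩ := hj
  obtain ⟨rfl, hfg⟩ := Sigma.mk.inj_iff.mp (e.injective hj')
  exact (congrFun (eq_of_heq hfg) ⟨i, hij⟩).symm

end Branch

theorem mk_le_mul_two_power_of_covers {X β : Type u} {κ : Cardinal.{u}} (F : X → Set β)
    {P : Set (Set β)} (hP : ∀ a ∈ P, #a ≤ κ) (hcov : ∀ x, ∃ a ∈ P, κ ≤ #(a ∩ F x : Set β))
    (hF : ∀ x y, κ ≤ #(F x ∩ F y : Set β) → x = y) : #X ≤ #P * 2 ^ κ := by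
  choose A hAP hA using hcov
  have hinj : Function.Injective fun x =>
      (⟨⟨A x, hAP x⟩, Subtype.val ⁻¹' F x⟩ : Σ a : P, Set (a : Set β)) := by
    intro x y h
    have hAF : A x ∩ F x = A y ∩ F y := by
      simpa [Subtype.image_preimage_val] using
        congrArg (fun p : Σ a : P, Set (a : Set β) => Subtype.val '' p.2) h
    refine hF x y ((hA x).trans (mk_le_mk_of_subset ?_))
    exact subset_inter inter_subset_right (hAF ▸ inter_subset_right)
  calc #X ≤ #(Σ a : P, Set (a : Set β)) := mk_le_of_injective hinj
    _ = sum fun a : P => 2 ^ #(a : Set β) := by simp only [mk_sigma, mk_set]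
    _ ≤ sum fun _ : P => 2 ^ κ :=
        sum_le_sum _ _ fun a => power_le_power_left two_ne_zero (hP a a.2)
    _ = #P * 2 ^ κ := sum_const' _ _

theorem mk_setOf_mk_eq_le_power (α : Type u) [Infinite α] (κ : Cardinal.{u}) :
    #{a : Set α | #a = κ} ≤ #α ^ κ :=
  (mk_le_mk_of_subset fun _ (ha : #_ = κ) => ha.le).trans (mk_bounded_set_le_of_infinite α κ)

section CoveringFamilies

variable {κ μ : Cardinal.{u}} (hκ : ℵ₀ ≤ κ) (hcof : μ.ord.cof = κ) (hκμ : κ ≤ μ)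
include hκ hcof hκμ

theorem exists_almostDisjoint_family (hpow : ∀ θ < μ, θ ^ κ ≤ μ) :
    ∃ F : (κ.ord.ToType → μ.ord.ToType) → Set μ.ord.ToType,
      (∀ f, #(F f) = κ) ∧ ∀ f g, κ ≤ #(F f ∩ F g : Set _) → f = g := by
  have hμ : ℵ₀ ≤ μ := hκ.trans hκμ
  have hnode : #(Node κ.ord.ToType μ.ord.ToType) ≤ #μ.ord.ToType := by
    rw [mk_sigma, mk_ord_toType]
    calc sum (fun i : κ.ord.ToType => #(Iic i → μ.ord.ToType))
        ≤ sum fun _ : κ.ord.ToType => μ := sum_le_sum _ _ fun i => ?_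
      _ = κ * μ := by rw [sum_const', mk_ord_toType]
      _ ≤ μ := mul_le_of_le hμ hκμ le_rfl
    have hIic : #(Iic i) < κ :=
      (mk_Iic_lt i (by simp) (by simpa using hκ)).trans_eq (mk_ord_toType κ)
    rw [← power_def, mk_ord_toType]
    refine power_le_self_of_lt_cof hμ (hIic.trans_eq hcof.symm) fun θ hθ => ?_
    rcases eq_or_ne θ 0 with rfl | hθ0
    · exact (zero_power_le _).trans (one_le_aleph0.trans hμ)
    · exact (power_le_power_left hθ0 hIic.le).trans (hpow θ hθ)
  obtain ⟨e⟩ := (le_def _ _).mp hnode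
  refine ⟨branch e, fun f => (mk_branch e f).trans (mk_ord_toType κ), fun f g h => ?_⟩
  exact eq_of_mk_Iio_lt_mk_inter_branch e fun i =>
    ((mk_Iio_lt i (by simp)).trans_eq (mk_ord_toType κ)).trans_le h

theorem power_le_mk_of_covers (hpow : ∀ θ < μ, θ ^ κ < μ) {P : Set (Set μ.ord.ToType)}
    (hP : ∀ a ∈ P, #a = κ)
    (hcov : ∀ b : Set μ.ord.ToType, #b = κ → ∃ a ∈ P, #(a ∩ b : Set _) = κ) :
    μ ^ κ ≤ #P := by
  obtain ⟨F, hFκ, hF⟩ := exists_almostDisjoint_family hκ hcof hκμ fun θ hθ => (hpow θ hθ).le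
  have hcount := mk_le_mul_two_power_of_covers F (fun a ha => (hP a ha).le)
    (fun f => (hcov _ (hFκ f)).imp fun _ ⟨ha, h⟩ => ⟨ha, h.ge⟩) hF
  rw [← power_def, mk_ord_toType, mk_ord_toType] at hcount
  by_contra! hP_lt
  have hμ_le : μ ≤ μ ^ κ := self_le_power μ (one_le_aleph0.trans hκ)
  have h2κ : 2 ^ κ < μ ^ κ :=
    (hpow 2 ((natCast_lt_aleph0 (n := 2)).trans_le (hκ.trans hκμ))).trans_le hμ_le
  exact hcount.not_gt (mul_lt_of_lt ((hκ.trans hκμ).trans hμ_le) hP_lt h2κ)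

end CoveringFamilies

theorem UJbd_eq_power_general (κ μ : Cardinal.{0})
    (hunc : Cardinal.aleph0 < κ)
    (hcof : μ.ord.cof = κ) (hlt : κ < μ)
    (hpow : ∀ θ : Cardinal.{0}, θ < μ → θ ^ κ < μ) :
    UJbd κ μ = μ ^ κ := by
  have hcovers : ∀ b : Set μ.ord.ToType, #b = κ →
      ∃ a ∈ {a : Set μ.ord.ToType | #a = κ}, #(a ∩ b : Set _) = κ :=
    fun b hb => ⟨b, hb, by rwa [inter_self]⟩
  have hall : #{a : Set μ.ord.ToType | #a = κ} = μ ^ κ := by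
    refine le_antisymm ?_
      (power_le_mk_of_covers hunc.le hcof hlt.le hpow (fun _ h => h) hcovers)
    have : Infinite μ.ord.ToType := infinite_iff.mpr (by simpa using (hunc.trans hlt).le)
    simpa using mk_setOf_mk_eq_le_power μ.ord.ToType κ
  have hmem : μ ^ κ ∈ {c | ∃ P : Set (Set μ.ord.ToType), #P = c ∧ (∀ A ∈ P, #A = κ) ∧
      ∀ b : Set μ.ord.ToType, #b = κ → ∃ a ∈ P, #(a ∩ b : Set _) = κ} :=
    ⟨_, hall, fun _ h => h, hcovers⟩
  refine le_antisymm (csInf_le' hmem) (le_csInf ⟨_, hmem⟩ ?_)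
  rintro _ ⟨P, rfl, hP, hcov⟩
  exact power_le_mk_of_covers hunc.le hcof hlt.le hpow hP hcov

/-- If `κ` is an uncountable regular cardinal with `κ = cf μ < μ`, and `θ^κ < μ` for every
cardinal `θ < μ`, then `U_{J^bd_κ}(μ) = μ^κ`. -/
theorem UJbd_eq_power (κ μ : Cardinal.{0})
    (hreg : κ.IsRegular) (hunc : Cardinal.aleph0 < κ)
    (hcof : μ.ord.cof = κ) (hlt : κ < μ)
    (hpow : ∀ θ : Cardinal.{0}, θ < μ → θ ^ κ < μ) :
    UJbd κ μ = μ ^ κ :=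
  UJbd_eq_power_general κ μ hunc hcof hlt hpow
end
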